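/- arXiv:math/0501226 — 4 statements merged into one kernel-verified Lean document; each statement's English description precedes it below -/
import Mathlib

section
/- The simplicial complex ε({v,v_1}, {v,w_1}, ..., {v,w_j}; V), where v, v_1, w_1, ..., w_j are distinct elements of V = {v, v_1, w_1, ..., w_j}, is homeomorphic to (has the reduced homology of) a (j−1)-dimensional sphere. -/
open Finset

/-- An abstract simplicial complex on ambient vertex type `U`:
a downward-closed set of finite subsets of `U`. -/
structure SComplex (U : Type*) where
  faces : Set (Finset U)
  down_closed : ∀ {s t : Finset U}, s ∈ faces → t ⊆ s → t ∈ faces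

namespace SComplex

/-- An auxiliary (arbitrary) linear order on any type, used to fix orientations. -/
noncomputable def auxOrder (U : Type*) : LinearOrder U :=
  letI : DecidableRel (WellOrderingRel (α := U)) := fun _ _ => Classical.propDecidable _
  linearOrderOfSTO WellOrderingRel

/-- The simplicial boundary operator on formal `K`-linear combinations of finite
subsets of `U` (a finite set of cardinality `n+1` is regarded as an `n`-simplex). -/
noncomputable def bdry (K U : Type*) [Field K] : (Finset U →₀ K) →ₗ[K] (Finset U →₀ K) :=
  letI := Classical.decEq U
  letI := auxOrder U
  Finsupp.lsum K fun s => LinearMap.toSpanSingleton K _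
    (∑ v ∈ s, ((-1 : K) ^ ({w ∈ s | w < v}).card) • Finsupp.single (s.erase v) (1 : K))

/-- The space of simplicial `n`-chains of a complex (with `n : ℤ`; the empty face is a
`(-1)`-chain, so that the associated homology is *reduced* homology). -/
noncomputable def chains (K : Type*) [Field K] {U : Type*} (Δ : SComplex U) (n : ℤ) :
    Submodule K (Finset U →₀ K) :=
  Submodule.span K {f | ∃ s ∈ Δ.faces, (s.card : ℤ) = n + 1 ∧ f = Finsupp.single s (1 : K)}

/-- The dimension over `K` of the `n`-th reduced simplicial homology of `Δ`
with coefficients in the field `K`. -/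
noncomputable def rhd (K : Type*) [Field K] {U : Type*} (Δ : SComplex U) (n : ℤ) : ℕ :=
  Module.finrank K ↥(Δ.chains K n ⊓ LinearMap.ker (bdry K U))
    - Module.finrank K ↥((Δ.chains K (n + 1)).map (bdry K U))

/-- The restriction (induced subcomplex) of `Δ` to a subset `W` of its vertices. -/
def restrict {U : Type*} (Δ : SComplex U) (W : Finset U) : SComplex U where
  faces := {s | s ∈ Δ.faces ∧ s ⊆ W}
  down_closed := fun hs hts => ⟨Δ.down_closed hs.1 hts, hts.trans hs.2⟩

/-- The vertex set of a complex, as a `Finset`. -/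
noncomputable def vertexFinset {U : Type*} [Fintype U] (Δ : SComplex U) : Finset U :=
  (Set.toFinite {u : U | {u} ∈ Δ.faces}).toFinset

/-- The graded Betti numbers `β_{i,d}` of the Stanley-Reisner ring `K[Δ]` over the
polynomial ring on the vertices of `Δ`, given by Hochster's formula, with the
conventions `β_{0,d} = δ_{d,0}` and `β_{i,d} = 0` for `i < 0` or `d < 0`. -/
noncomputable def betti (K : Type*) [Field K] {U : Type*} [Fintype U] (Δ : SComplex U)
    (i d : ℤ) : ℕ :=
  if d < 0 then 0 else
    ∑ W ∈ Δ.vertexFinset.powersetCard d.toNat, rhd K (Δ.restrict W) (d - i - 1)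

/-- The total Betti numbers `β_i = Σ_d β_{i,d}`. -/
noncomputable def totalBetti (K : Type*) [Field K] {U : Type*} [Fintype U] (Δ : SComplex U)
    (i : ℤ) : ℕ :=
  ∑ d ∈ Finset.range (Fintype.card U + 1), betti K Δ i (d : ℤ)

/-- The projective dimension of the Stanley-Reisner ring `K[Δ]` over the polynomial ring
on the vertices of `Δ`: the largest `i` with `β_i(Δ) ≠ 0`. -/
noncomputable def pd (K : Type*) [Field K] {U : Type*} [Fintype U] (Δ : SComplex U) : ℕ :=
  sSup {i : ℕ | totalBetti K Δ (i : ℤ) ≠ 0}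

/-- The join of two simplicial complexes. -/
def join {U : Type*} [DecidableEq U] (Δ₁ Δ₂ : SComplex U) : SComplex U where
  faces := {s | ∃ t ∈ Δ₁.faces, ∃ u ∈ Δ₂.faces, s = t ∪ u}
  down_closed := by
    rintro s s' ⟨t, ht, u, hu, rfl⟩ hsub
    refine ⟨s' ∩ t, Δ₁.down_closed ht inter_subset_right,
      s' ∩ u, Δ₂.down_closed hu inter_subset_right, ?_⟩
    ext x
    simp only [Finset.mem_union, Finset.mem_inter]
    constructor
    · intro hx
      rcases Finset.mem_union.1 (hsub hx) with h | h
      · exact Or.inl ⟨hx, h⟩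
      · exact Or.inr ⟨hx, h⟩
    · rintro (⟨h, -⟩ | ⟨h, -⟩) <;> exact h

/-- The intersection of two simplicial complexes. -/
def inter {U : Type*} (Δ₁ Δ₂ : SComplex U) : SComplex U where
  faces := Δ₁.faces ∩ Δ₂.faces
  down_closed := fun hs hts => ⟨Δ₁.down_closed hs.1 hts, Δ₂.down_closed hs.2 hts⟩

/-- The Alexander dual `Δ* = {F ⊆ V(Δ) | V(Δ) \ F ∉ Δ}` of a simplicial complex. -/
def dual {U : Type*} [Fintype U] [DecidableEq U] (Δ : SComplex U) : SComplex U where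
  faces := {F | F ⊆ Δ.vertexFinset ∧ Δ.vertexFinset \ F ∉ Δ.faces}
  down_closed := fun {s t} hs hts =>
    ⟨hts.trans hs.1, fun h => hs.2 (Δ.down_closed h (sdiff_subset_sdiff (le_refl _) hts))⟩

/-- The link of a face `F` in a simplicial complex. -/
def link {U : Type*} [DecidableEq U] (Δ : SComplex U) (F : Finset U) : SComplex U where
  faces := {s | s ∪ F ∈ Δ.faces ∧ Disjoint s F}
  down_closed := fun {s t} hs hts =>
    ⟨Δ.down_closed hs.1 (Finset.union_subset_union_left hts), hs.2.mono_left hts⟩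

/-- The simplicial complex `ε(a₁, …, aₛ; V)` whose maximal faces are the sets
`V \ aᵢ` (for a family `a : ι → Finset U` of subsets of a finite set `V`). -/
def eps {U : Type*} {ι : Type*} [DecidableEq U] (a : ι → Finset U) (V : Finset U) :
    SComplex U where
  faces := {s | ∃ i, s ⊆ V \ a i}
  down_closed := fun {s t} hs hts => hs.imp fun _ hi => hts.trans hi

end SComplex

open SComplex

/-- The independence complex `Δ(G)` of a simple graph: faces are the independent sets. -/
def indepComplex {V : Type*} (G : SimpleGraph V) : SComplex V where
  faces := {s | ∀ u ∈ s, ∀ w ∈ s, ¬ G.Adj u w}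
  down_closed := fun hs hts u hu w hw => hs u (hts hu) w (hts hw)

/-- The graded Betti numbers `β^K_{i,d}(G)` of `K[V(G)]/I(G)`, where `I(G)` is the
edge ideal of `G`. -/
noncomputable def bettiG (K : Type*) [Field K] {V : Type*} [Fintype V] (G : SimpleGraph V)
    (i d : ℤ) : ℕ :=
  betti K (indepComplex G) i d

/-- The total Betti numbers `β^K_i(G) = Σ_d β^K_{i,d}(G)` of the edge ideal quotient. -/
noncomputable def totalBettiG (K : Type*) [Field K] {V : Type*} [Fintype V] (G : SimpleGraph V)
    (i : ℤ) : ℕ :=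
  totalBetti K (indepComplex G) i

/-- The projective dimension `pd^K(G)` of `K[V(G)]/I(G)` over `K[V(G)]`. -/
noncomputable def pdG (K : Type*) [Field K] {V : Type*} [Fintype V] (G : SimpleGraph V) : ℕ :=
  pd K (indepComplex G)

/-!
Every `aᵢ` contains `v`, and the sets `aᵢ \ {v}` are the singletons of `S = V \ {v}`, so
`ε` is the boundary of the simplex on `S`: its faces are the proper subsets of `S`, and
`#S = j + 1`. Fix `x ∈ S` and let `h` be the cone operator that adds the vertex `x` to a
simplex. Then `∂h + h∂ = id` on all chains, so every cycle `z` equals `∂(h z)`. Below the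
top degree `h z` is again a chain of the boundary complex, so the homology vanishes there; in
degree `#S - 2` it is a multiple of `[S]`, so the cycles are spanned by `∂[S] ≠ 0`, and there
are no boundaries.
-/

namespace SComplex

variable {U : Type*}

lemma ext {Δ₁ Δ₂ : SComplex U} (h : Δ₁.faces = Δ₂.faces) : Δ₁ = Δ₂ := by
  cases Δ₁; cases Δ₂; congr

def simplexBoundary (S : Finset U) : SComplex U where
  faces := {s | s ⊂ S}
  down_closed := fun hs hts => hts.trans_ssubset hs

lemma eps_insert_pair_eq_simplexBoundary [DecidableEq U] {ι : Type*} [Fintype ι] {v : U}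
    {b : ι → U} (hv : v ∉ univ.image b) :
    eps (fun i => {v, b i}) (insert v (univ.image b)) = simplexBoundary (univ.image b) := by
  have hdiff : ∀ i, insert v (univ.image b) \ {v, b i} = (univ.image b).erase (b i) := by
    grind
  refine ext (Set.ext fun s => ?_)
  simp [eps, simplexBoundary, hdiff, ssubset_iff_exists_subset_erase]

end SComplex

section OrientedChains

variable (R : Type*) [CommRing R] {U : Type*} [LinearOrder U]

def orientationSign (s : Finset U) (v : U) : R := (-1) ^ #{w ∈ s | w < v}

noncomputable def orientedBdry : (Finset U →₀ R) →ₗ[R] (Finset U →₀ R) :=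
  Finsupp.linearCombination R fun s =>
    ∑ v ∈ s, orientationSign R s v • Finsupp.single (s.erase v) 1

/-- The sign is the coefficient of `s` in `∂ (insert x s)`; it makes `cone R x` a contracting
homotopy. -/
noncomputable def cone (x : U) : (Finset U →₀ R) →ₗ[R] (Finset U →₀ R) :=
  Finsupp.linearCombination R fun s =>
    if x ∈ s then 0 else orientationSign R (insert x s) x • Finsupp.single (insert x s) 1

variable {R}

lemma orientedBdry_single (s : Finset U) (a : R) :
    orientedBdry R (Finsupp.single s a)
      = a • ∑ v ∈ s, orientationSign R s v • Finsupp.single (s.erase v) 1 := by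
  simp [orientedBdry]

lemma cone_single (x : U) (s : Finset U) (a : R) :
    cone R x (Finsupp.single s a) = a • if x ∈ s then 0
      else orientationSign R (insert x s) x • Finsupp.single (insert x s) 1 := by
  simp [cone]

lemma orientationSign_mul_self (s : Finset U) (v : U) :
    orientationSign R s v * orientationSign R s v = 1 := by
  rw [orientationSign, ← pow_add, ← two_mul, pow_mul, neg_one_sq, one_pow]

lemma orientationSign_insert {x : U} {s : Finset U} (hx : x ∉ s) (v : U) :
    orientationSign R (insert x s) v = (if x < v then -1 else 1) * orientationSign R s v := by
  unfold orientationSign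
  rw [filter_insert]
  split_ifs with h
  · rw [card_insert_of_notMem fun h' => hx (mem_filter.1 h').1, pow_succ, mul_comm]
  · rw [one_mul]

lemma orientationSign_of_mem {v : U} {s : Finset U} (hv : v ∈ s) (u : U) :
    orientationSign R s u
      = (if v < u then -1 else 1) * orientationSign R (s.erase v) u := by
  rw [← orientationSign_insert (notMem_erase v s), insert_erase hv]

lemma orientationSign_insert_mul {x v : U} {s : Finset U} (hx : x ∉ s) (hv : v ∈ s) :
    orientationSign R (insert x s) x * orientationSign R (insert x s) v
      = -(orientationSign R s v * orientationSign R (insert x (s.erase v)) x) := by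
  have hxv : x ≠ v := fun h => hx (h ▸ hv)
  rw [orientationSign_insert hx, orientationSign_insert hx,
    orientationSign_insert fun h => hx (mem_of_mem_erase h), orientationSign_of_mem hv x]
  rcases hxv.lt_or_gt with h | h <;> simp only [h, h.not_gt, lt_irrefl, if_true, if_false] <;> ring

lemma orientationSign_mul_erase {u v : U} {s : Finset U} (hu : u ∈ s) (hv : v ∈ s)
    (huv : u ≠ v) :
    orientationSign R s v * orientationSign R (s.erase v) u
      = -(orientationSign R s u * orientationSign R (s.erase u) v) := by
  rw [orientationSign_of_mem hu v, orientationSign_of_mem hv u]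
  rcases huv.lt_or_gt with h | h <;> simp only [h, h.not_gt, if_true, if_false] <;> ring

lemma orientedBdry_orientedBdry_single (s : Finset U) :
    orientedBdry R (orientedBdry R (Finsupp.single s 1)) = 0 := by
  set g : U × U → (Finset U →₀ R) := fun p =>
    (orientationSign R s p.1 * orientationSign R (s.erase p.1) p.2) •
      Finsupp.single ((s.erase p.1).erase p.2) 1
  have hexpand : orientedBdry R (orientedBdry R (Finsupp.single s 1))
      = ∑ p ∈ s.offDiag, g p := by
    rw [sum_finset_product _ s (fun v => s.erase v) fun p => by simp [eq_comm, and_comm]]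
    simp only [g, orientedBdry_single, map_sum, map_smul, smul_sum, smul_smul, one_mul]
  rw [hexpand]
  refine sum_involution (fun p _ => p.swap) (fun p hp => ?_) (fun p hp _ => ?_)
    (fun p hp => mem_offDiag.2 ?_) (fun p _ => p.swap_swap)
  · obtain ⟨h1, h2, hne⟩ := mem_offDiag.1 hp
    simp only [g, Prod.fst_swap, Prod.snd_swap, erase_right_comm,
      orientationSign_mul_erase h2 h1 hne.symm, neg_smul, neg_add_cancel]
  · obtain ⟨-, -, hne⟩ := mem_offDiag.1 hp
    exact fun h => hne (congrArg Prod.snd h)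
  · obtain ⟨h1, h2, hne⟩ := mem_offDiag.1 hp
    exact ⟨h2, h1, hne.symm⟩

lemma cone_orientedBdry_single_of_mem {x : U} {s : Finset U} (hx : x ∈ s) :
    cone R x (orientedBdry R (Finsupp.single s 1)) = Finsupp.single s 1 := by
  have hterm : ∀ v, cone R x (orientationSign R s v • Finsupp.single (s.erase v) 1)
      = if v = x then Finsupp.single s 1 else 0 := by
    intro v
    rw [map_smul, cone_single, one_smul]
    split_ifs with hxv hvx hvx
    · exact absurd (hvx ▸ hxv) (notMem_erase v s)
    · rw [smul_zero]
    · subst hvx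
      rw [insert_erase hx, smul_smul, orientationSign_mul_self, one_smul]
    · exact absurd (mem_erase.2 ⟨Ne.symm hvx, hx⟩) hxv
  rw [orientedBdry_single, one_smul, map_sum, sum_congr rfl fun v _ => hterm v, sum_ite_eq' s x, if_pos hx]

lemma orientedBdry_cone_add_cone_orientedBdry_single_of_notMem {x : U} {s : Finset U}
    (hx : x ∉ s) :
    orientedBdry R (cone R x (Finsupp.single s 1))
      + cone R x (orientedBdry R (Finsupp.single s 1)) = Finsupp.single s 1 := by
  have hcancel : ∀ v ∈ s,
      (orientationSign R (insert x s) x * orientationSign R (insert x s) v) •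
          Finsupp.single ((insert x s).erase v) (1 : R)
        + cone R x (orientationSign R s v • Finsupp.single (s.erase v) 1) = 0 := by
    intro v hv
    have hxv : x ≠ v := fun h => hx (h ▸ hv)
    rw [map_smul, cone_single, if_neg fun h => hx (mem_of_mem_erase h), one_smul, smul_smul,
      erase_insert_of_ne hxv, orientationSign_insert_mul hx hv, neg_smul, neg_add_cancel]
  rw [cone_single, if_neg hx, one_smul, map_smul, orientedBdry_single, one_smul,
    sum_insert hx, erase_insert hx, smul_add, smul_smul, orientationSign_mul_self, one_smul,
    orientedBdry_single, one_smul, map_sum, add_assoc, smul_sum, ← sum_add_distrib]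
  simp only [smul_smul]
  rw [sum_eq_zero hcancel, add_zero]

lemma orientedBdry_cone_add_cone_orientedBdry (x : U) (f : Finset U →₀ R) :
    orientedBdry R (cone R x f) + cone R x (orientedBdry R f) = f := by
  suffices orientedBdry R ∘ₗ cone R x + cone R x ∘ₗ orientedBdry R = LinearMap.id from
    LinearMap.congr_fun this f
  refine Finsupp.lhom_ext' fun s => LinearMap.ext_ring ?_
  by_cases hx : x ∈ s
  · simp [cone_single, hx, cone_orientedBdry_single_of_mem hx]
  · simpa using orientedBdry_cone_add_cone_orientedBdry_single_of_notMem hx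

lemma inf_ker_le_map_of_map_cone_le {C D : Submodule R (Finset U →₀ R)} {x : U}
    (h : C.map (cone R x) ≤ D) :
    C ⊓ LinearMap.ker (orientedBdry R) ≤ D.map (orientedBdry R) := by
  rintro z ⟨hzC, hz⟩
  refine ⟨cone R x z, h ⟨z, hzC, rfl⟩, ?_⟩
  simpa [LinearMap.mem_ker.1 hz] using orientedBdry_cone_add_cone_orientedBdry x z

lemma orientedBdry_single_ne_zero [Nontrivial R] {S : Finset U} (hS : S.Nonempty) :
    orientedBdry R (Finsupp.single S (1 : R)) ≠ 0 := by
  obtain ⟨x, hx⟩ := hS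
  intro h
  have hcoeff := congrArg (· (S.erase x)) h
  simp only [orientedBdry_single, one_smul, Finsupp.finsetSum_apply, Finsupp.coe_zero,
    Pi.zero_apply] at hcoeff
  rw [sum_eq_single_of_mem x hx fun u hu hux => by simp [erase_inj S hu |>.not.2 hux]] at hcoeff
  simp only [Finsupp.smul_apply, Finsupp.single_eq_same, smul_eq_mul, mul_one] at hcoeff
  exact left_ne_zero_of_mul_eq_one (orientationSign_mul_self S x) hcoeff

end OrientedChains

section SimplexBoundary

variable (K : Type*) [Field K] {U : Type*} {S : Finset U}

lemma chains_simplexBoundary_eq_bot {n : ℤ} (hn : n + 1 < 0 ∨ (#S : ℤ) ≤ n + 1) :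
    (simplexBoundary S).chains K n = ⊥ := by
  rw [chains, Submodule.span_eq_bot]
  rintro _ ⟨s, hs, hcard, -⟩
  have := card_lt_card (show s ⊂ S from hs)
  omega

instance finiteDimensional_chains_simplexBoundary (n : ℤ) :
    FiniteDimensional K ((simplexBoundary S).chains K n) := by
  refine FiniteDimensional.span_of_finite K
    (((S.powerset : Set (Finset U)).toFinite.image fun s => Finsupp.single s 1).subset ?_)
  rintro _ ⟨s, hs, -, rfl⟩
  exact ⟨s, mem_powerset.2 (show s ⊂ S from hs).subset, rfl⟩

variable {K} [LinearOrder U]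

lemma map_cone_chains_le {Δ : SComplex U} {x : U} {n : ℤ} {P : Submodule K (Finset U →₀ K)}
    (h : ∀ s ∈ Δ.faces, (#s : ℤ) = n + 1 → x ∉ s → Finsupp.single (insert x s) 1 ∈ P) :
    (Δ.chains K n).map (cone K x) ≤ P := by
  rw [chains, Submodule.map_span_le]
  rintro _ ⟨s, hs, hcard, rfl⟩
  rw [cone_single, one_smul]
  split_ifs with hx
  · exact P.zero_mem
  · exact P.smul_mem _ (h s hs hcard hx)

lemma orientedBdry_single_mem_chains_simplexBoundary :
    orientedBdry K (Finsupp.single S 1) ∈ (simplexBoundary S).chains K (#S - 2) := by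
  rw [orientedBdry_single, one_smul]
  refine Submodule.sum_mem _ fun v hv => Submodule.smul_mem _ _ (Submodule.subset_span ?_)
  refine ⟨S.erase v, erase_ssubset hv, ?_, rfl⟩
  rw [card_erase_of_mem hv]
  have := card_pos.2 ⟨v, hv⟩
  omega

lemma cycles_simplexBoundary_le_boundaries {x : U} (hx : x ∈ S) {n : ℤ} (hn : n + 2 < #S) :
    (simplexBoundary S).chains K n ⊓ LinearMap.ker (orientedBdry K)
      ≤ ((simplexBoundary S).chains K (n + 1)).map (orientedBdry K) := by
  refine inf_ker_le_map_of_map_cone_le <| map_cone_chains_le fun s hs hcard hxs =>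
    Submodule.subset_span ⟨insert x s, ?_, ?_, rfl⟩
  · refine (insert_subset hx (show s ⊂ S from hs).subset).ssubset_of_ne fun h => ?_
    have := congrArg card h
    rw [card_insert_of_notMem hxs] at this
    omega
  · rw [card_insert_of_notMem hxs]
    push_cast
    omega

lemma cycles_simplexBoundary_eq_span {x : U} (hx : x ∈ S) :
    (simplexBoundary S).chains K (#S - 2) ⊓ LinearMap.ker (orientedBdry K)
      = K ∙ orientedBdry K (Finsupp.single S 1) := by
  refine le_antisymm ?_ ((Submodule.span_singleton_le_iff_mem _ _).2
    ⟨orientedBdry_single_mem_chains_simplexBoundary,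
      orientedBdry_orientedBdry_single S⟩)
  have hcone : ((simplexBoundary S).chains K (#S - 2)).map (cone K x)
      ≤ K ∙ Finsupp.single S 1 := map_cone_chains_le fun s hs hcard hxs => by
    have hins : insert x s = S := by
      refine eq_of_subset_of_card_le (insert_subset hx (show s ⊂ S from hs).subset) ?_
      rw [card_insert_of_notMem hxs]
      omega
    rw [hins]
    exact Submodule.mem_span_singleton_self _
  simpa [Submodule.map_span] using inf_ker_le_map_of_map_cone_le hcone

lemma finrank_cycles_sub_finrank_boundaries_simplexBoundary (hS : S.Nonempty) (n : ℤ) :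
    Module.finrank K ↥((simplexBoundary S).chains K n ⊓ LinearMap.ker (orientedBdry K))
      - Module.finrank K ↥(((simplexBoundary S).chains K (n + 1)).map (orientedBdry K))
      = if n = #S - 2 then 1 else 0 := by
  obtain ⟨x, hx⟩ := hS
  rcases lt_trichotomy n (#S - 2) with hn | rfl | hn
  · rw [if_neg hn.ne]
    exact Nat.sub_eq_zero_of_le
      (Submodule.finrank_mono (cycles_simplexBoundary_le_boundaries hx (by omega)))
  · rw [if_pos rfl, cycles_simplexBoundary_eq_span hx,
      chains_simplexBoundary_eq_bot K (Or.inr (by omega)), Submodule.map_bot, finrank_bot,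
      finrank_span_singleton (orientedBdry_single_ne_zero ⟨x, hx⟩)]
  · rw [if_neg hn.ne', chains_simplexBoundary_eq_bot K (Or.inr (by omega)), bot_inf_eq,
      finrank_bot, zero_tsub]

end SimplexBoundary

lemma bdry_eq_orientedBdry (K U : Type*) [Field K] :
    bdry K U = @orientedBdry K _ U (auxOrder U) := by
  refine Finsupp.lhom_ext' fun s => LinearMap.ext_ring ?_
  simp only [bdry, LinearMap.comp_apply, Finsupp.lsingle_apply, Finsupp.lsum_single,
    LinearMap.toSpanSingleton_apply, orientedBdry_single, orientationSign, one_smul]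
  congr!

lemma rhd_simplexBoundary (K : Type*) [Field K] {U : Type*} {S : Finset U} (hS : S.Nonempty)
    (n : ℤ) : rhd K (simplexBoundary S) n = if n = #S - 2 then 1 else 0 := by
  let := auxOrder U
  rw [rhd, bdry_eq_orientedBdry]
  exact finrank_cycles_sub_finrank_boundaries_simplexBoundary hS n

/-- The complex `ε({v,v₁}, {v,w₁}, …, {v,w_j}; V)` on
`V = {v, v₁, w₁, …, w_j}` (all distinct) has the reduced homology of a `(j-1)`-sphere:
its reduced homology is `1`-dimensional in degree `j - 1` and zero elsewhere. -/
theorem eps_sphere {U : Type*} [DecidableEq U] (K : Type*) [Field K] {j : ℕ}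
    (v v₁ : U) (w : Fin j → U) (hw : Function.Injective w)
    (hvv₁ : v ≠ v₁) (hwv : ∀ i, w i ≠ v) (hwv₁ : ∀ i, w i ≠ v₁) :
    ∀ n : ℤ,
      rhd K
        (eps (Fin.cons {v, v₁} (fun i : Fin j => ({v, w i} : Finset U)) :
            Fin (j + 1) → Finset U)
          (insert v (insert v₁ (Finset.image w Finset.univ)))) n
        = if n = (j : ℤ) - 1 then 1 else 0 := by
  set b : Fin (j + 1) → U := Fin.cons v₁ w
  have hb : Function.Injective b :=
    Fin.cons_injective_iff.2 ⟨fun ⟨i, hi⟩ => hwv₁ i hi, hw⟩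
  have hv : v ∉ univ.image b := by
    simpa [b, Fin.exists_fin_succ] using ⟨hvv₁.symm, hwv⟩
  have ha : (Fin.cons {v, v₁} fun i => {v, w i} : Fin (j + 1) → Finset U)
      = fun i => {v, b i} :=
    (Fin.comp_cons (fun y => ({v, y} : Finset U)) v₁ w).symm
  have hV : insert v₁ (univ.image w) = univ.image b := by
    ext; simp [b, Fin.exists_fin_succ, eq_comm]
  intro n
  rw [ha, hV, eps_insert_pair_eq_simplexBoundary hv,
    rhd_simplexBoundary K (univ_nonempty.image b), card_image_of_injective _ hb, card_univ,
    Fintype.card_fin]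
  congr 2
  omega
end

section
/- Let G be a finite simple graph and F a face of the Alexander dual Δ*(G) of the independence complex Δ(G). If e_1,...,e_r are the edges of G disjoint from F, then link_{Δ*(G)} F = ε(e_1,...,e_r; V(G) \ F). -/
open Finset

open SComplex

/-- For a face `F` of the Alexander dual `Δ*(G)` of the independence complex
of a finite simple graph `G`, if `e₁,…,e_r` are the edges of `G` disjoint from `F`, then
`link_{Δ*(G)} F = ε(e₁,…,e_r; V(G) \ F)`. -/
theorem link_dual_eq_eps {V : Type*} [Fintype V] [DecidableEq V] (G : SimpleGraph V)
    (F : Finset V) (hF : F ∈ (indepComplex G).dual.faces) :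
    ((indepComplex G).dual.link F).faces
      = (eps
          (fun e : {p : V × V // G.Adj p.1 p.2 ∧ p.1 ∉ F ∧ p.2 ∉ F} =>
            ({e.1.1, e.1.2} : Finset V))
          (Finset.univ \ F)).faces := by
  classical
  have hvert : (indepComplex G).vertexFinset = Finset.univ := by
    ext u
    simp only [SComplex.vertexFinset, Set.Finite.mem_toFinset, Set.mem_setOf_eq,
      Finset.mem_univ, iff_true, indepComplex]
    intro a ha b hb
    simp only [Finset.mem_singleton] at ha hb
    subst ha; subst hb
    exact G.irrefl
  ext s
  simp only [SComplex.link, SComplex.dual, SComplex.eps, Set.mem_setOf_eq, hvert]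
  constructor
  · rintro ⟨⟨-, hni⟩, hdisj⟩
    simp only [indepComplex, Set.mem_setOf_eq] at hni
    push_neg at hni
    obtain ⟨u, hu, w, hw, hadj⟩ := hni
    simp only [Finset.mem_sdiff, Finset.mem_univ, true_and, Finset.mem_union, not_or] at hu hw
    refine ⟨⟨(u, w), hadj, hu.2, hw.2⟩, ?_⟩
    intro x hx
    simp only [Finset.mem_sdiff, Finset.mem_union, Finset.mem_insert, Finset.mem_singleton]
    refine ⟨⟨Finset.mem_univ x, Finset.disjoint_left.mp hdisj hx⟩, ?_⟩
    rintro (rfl | rfl)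
    · exact hu.1 hx
    · exact hw.1 hx
  · rintro ⟨⟨⟨u, w⟩, hadj, huF, hwF⟩, hsub⟩
    have hdisj : Disjoint s F := by
      refine Finset.disjoint_left.mpr fun x hx hxF => ?_
      have := hsub hx
      simp only [Finset.mem_sdiff, Finset.mem_univ, true_and] at this
      exact this.1 hxF
    refine ⟨⟨Finset.subset_univ _, fun hind => ?_⟩, hdisj⟩
    have hus : u ∉ s := fun h => by have := hsub h; simp at this
    have hws : w ∉ s := fun h => by have := hsub h; simp at this
    have hu : u ∈ Finset.univ \ (s ∪ F) := by simp [hus, huF]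
    have hw : w ∈ Finset.univ \ (s ∪ F) := by simp [hws, hwF]
    exact hind u hu w hw hadj
end

section
/- Let T be a forest with a vertex v whose neighbours are v_1,...,v_n (n ≥ 2), with v_1,...,v_{n-1} of degree one. Let T' = T \ {v_1} and T'' = T \ {v, v_1,...,v_n}. Then for all i, d and any field K: β_{i,d}(T) = β_{i,d}(T') + Σ_{j=0}^{n-1} C(n−1, j) · β_{i−(j+1), d−(j+2)}(T''). -/
open Finset

open SComplex

open SComplex Finsupp

set_option synthInstance.maxHeartbeats 1000000
set_option maxHeartbeats 1600000

section BD
variable (K : Type*) [Field K] {U : Type*}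

/-- The boundary operator with respect to an explicit order and decidable equality. -/
noncomputable def bd [DecidableEq U] [LinearOrder U] : (Finset U →₀ K) →ₗ[K] (Finset U →₀ K) :=
  Finsupp.lsum K fun s => LinearMap.toSpanSingleton K _
    (∑ v ∈ s, ((-1 : K) ^ ({w ∈ s | w < v}).card) • Finsupp.single (s.erase v) (1 : K))

lemma bdry_eq_bd :
    bdry K U = letI := Classical.decEq U; letI := auxOrder U; bd K := rfl

variable {K}
variable [DecidableEq U] [LinearOrder U]

/-- sign of a vertex in a simplex -/
def csgn (s : Finset U) (v : U) : K := (-1) ^ (s.filter (fun w => w < v)).card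

lemma csgn_mul_self (s : Finset U) (v : U) : (csgn s v : K) * csgn s v = 1 := by
  rw [csgn, ← pow_add, ← two_mul, pow_mul]; simp

lemma bd_single (s : Finset U) :
    bd K (Finsupp.single s (1 : K))
      = ∑ v ∈ s, (csgn s v : K) • Finsupp.single (s.erase v) (1 : K) := by
  simp [bd, Finsupp.lsum_single, LinearMap.toSpanSingleton_apply, csgn]

lemma csgn_erase {s : Finset U} {u v : U} (huv : u ≠ v) :
    (csgn (s.erase v) u : K) = (if v ∈ s ∧ v < u then -1 else 1) * csgn s u := by
  rw [csgn, csgn, Finset.filter_erase]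
  by_cases h : v ∈ s ∧ v < u
  · have hm : v ∈ s.filter (fun w => w < u) := Finset.mem_filter.2 h
    rw [Finset.card_erase_of_mem hm, if_pos h]
    obtain ⟨m, hmc⟩ : ∃ m, (s.filter (fun w => w < u)).card = m + 1 :=
      ⟨_, (Nat.succ_pred_eq_of_pos (Finset.card_pos.2 ⟨v, hm⟩)).symm⟩
    rw [hmc, pow_succ]
    simp
  · rw [Finset.erase_eq_of_notMem (by simp only [Finset.mem_filter]; exact h), if_neg h, one_mul]

lemma csgn_erase_self {s : Finset U} (v : U) : (csgn (s.erase v) v : K) = csgn s v := by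
  rw [csgn, csgn, Finset.filter_erase, Finset.erase_eq_of_notMem]
  simp

lemma csgn_insert {s : Finset U} {a v : U} (ha : a ∉ s) :
    (csgn (insert a s) v : K) = (if a < v then -1 else 1) * csgn s v := by
  rw [csgn, csgn, Finset.filter_insert]
  by_cases h : a < v
  · rw [if_pos h, if_pos h,
      Finset.card_insert_of_notMem (fun hm => ha (Finset.mem_filter.1 hm).1), pow_succ]
    ring
  · rw [if_neg h, if_neg h, one_mul]

lemma csgn_insert_self {s : Finset U} (a : U) : (csgn (insert a s) a : K) = csgn s a := by
  rw [csgn, csgn, Finset.filter_insert, if_neg (lt_irrefl a)]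

/-- antisymmetric double sums vanish -/
lemma sum_erase_antisymm {M : Type*} [AddCommGroup M] (s : Finset U) (F : U → U → M)
    (h : ∀ v ∈ s, ∀ u ∈ s, u ≠ v → F v u = - F u v) :
    ∑ v ∈ s, ∑ u ∈ s.erase v, F v u = 0 := by
  classical
  induction s using Finset.induction_on with
  | empty => simp
  | @insert a t hat ih =>
    rw [Finset.sum_insert hat, Finset.erase_insert hat]
    have hrw : ∀ v ∈ t, ∑ u ∈ (insert a t).erase v, F v u
        = F v a + ∑ u ∈ t.erase v, F v u := by
      intro v hv
      have hva : v ≠ a := fun h' => hat (h' ▸ hv)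
      rw [Finset.erase_insert_of_ne (Ne.symm hva), Finset.sum_insert (by simp [hat])]
    rw [Finset.sum_congr rfl hrw, Finset.sum_add_distrib,
      ih (fun v hv u hu huv => h v (Finset.mem_insert_of_mem hv) u (Finset.mem_insert_of_mem hu) huv)]
    have : ∑ v ∈ t, F v a = - ∑ u ∈ t, F a u := by
      rw [← Finset.sum_neg_distrib]
      refine Finset.sum_congr rfl fun v hv => ?_
      exact h v (Finset.mem_insert_of_mem hv) a (Finset.mem_insert_self a t)
        (fun h' => hat (h' ▸ hv))
    rw [this]; abel

lemma bd_bd (x : Finset U →₀ K) : bd K (bd K x) = 0 := by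
  have key : ((bd K).comp (bd K) : (Finset U →₀ K) →ₗ[K] _) = 0 := by
    apply Finsupp.lhom_ext
    intro s b
    have hb : Finsupp.single s b = b • Finsupp.single s (1 : K) := by
      rw [Finsupp.smul_single, smul_eq_mul, mul_one]
    rw [hb]
    simp only [LinearMap.comp_apply, map_smul, LinearMap.zero_apply, smul_zero]
    rw [bd_single]
    rw [map_sum]
    simp only [map_smul, bd_single]
    rw [show (0 : Finset U →₀ K) = b • (0 : Finset U →₀ K) by simp]
    congr 1
    calc ∑ v ∈ s, (csgn s v : K) • ∑ u ∈ s.erase v, (csgn (s.erase v) u : K) •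
            Finsupp.single ((s.erase v).erase u) (1 : K)
        = ∑ v ∈ s, ∑ u ∈ s.erase v, ((csgn s v : K) * csgn (s.erase v) u) •
            Finsupp.single ((s.erase v).erase u) (1 : K) := by
          refine Finset.sum_congr rfl fun v _ => ?_
          rw [Finset.smul_sum]
          refine Finset.sum_congr rfl fun u _ => ?_
          rw [smul_smul]
      _ = 0 := by
          apply sum_erase_antisymm
          intro v hv u hu huv
          have h1 : (s.erase v).erase u = (s.erase u).erase v := Finset.erase_right_comm
          rw [h1, ← neg_smul]
          congr 1
          rw [csgn_erase (K := K) huv, csgn_erase (K := K) (Ne.symm huv)]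
          rcases lt_or_gt_of_ne huv with h | h
          · rw [if_neg (by rintro ⟨-, hlt⟩; exact absurd hlt (not_lt.2 h.le)),
              if_pos ⟨hu, h⟩]; ring
          · rw [if_pos ⟨hv, h⟩, if_neg (by rintro ⟨-, hlt⟩; exact absurd hlt (not_lt.2 h.le))]
            ring
  exact LinearMap.congr_fun key x

end BD
section Cone
variable {K : Type*} [Field K] {U : Type*} [DecidableEq U] [LinearOrder U]

/-- The cone (contraction) operator with apex `a`. -/
noncomputable def coneOp (a : U) : (Finset U →₀ K) →ₗ[K] (Finset U →₀ K) :=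
  Finsupp.lsum K fun s => LinearMap.toSpanSingleton K _
    (if a ∈ s then 0 else (csgn s a : K) • Finsupp.single (insert a s) (1 : K))

lemma coneOp_single (a : U) (s : Finset U) :
    (coneOp a : (Finset U →₀ K) →ₗ[K] _) (Finsupp.single s 1)
      = if a ∈ s then 0 else (csgn s a : K) • Finsupp.single (insert a s) (1 : K) := by
  simp [coneOp, Finsupp.lsum_single, LinearMap.toSpanSingleton_apply]

lemma cone_identity (a : U) (x : Finset U →₀ K) :
    bd K (coneOp a x) + coneOp a (bd K x) = x := by
  have key : (bd K).comp (coneOp a) + (coneOp a).comp (bd K)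
      = (LinearMap.id : (Finset U →₀ K) →ₗ[K] _) := by
    apply Finsupp.lhom_ext
    intro s b
    have hb : Finsupp.single s b = b • Finsupp.single s (1 : K) := by
      rw [Finsupp.smul_single, smul_eq_mul, mul_one]
    rw [hb]
    simp only [LinearMap.add_apply, LinearMap.comp_apply, map_smul, LinearMap.id_apply]
    congr 1
    rw [coneOp_single, bd_single]
    by_cases has : a ∈ s
    · rw [if_pos has]
      simp only [map_zero, zero_add, map_sum, map_smul, coneOp_single]
      rw [Finset.sum_eq_single a]
      · rw [if_neg (Finset.notMem_erase a s), smul_smul, csgn_erase_self,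
          Finset.insert_erase has, csgn_mul_self, one_smul]
      · intro v hv hva
        rw [if_pos (Finset.mem_erase.2 ⟨Ne.symm hva, has⟩), smul_zero]
      · intro h; exact absurd has h
    · rw [if_neg has, map_smul, bd_single, Finset.sum_insert has, smul_add,
        smul_smul, csgn_insert_self, csgn_mul_self, Finset.erase_insert has, one_smul,
        map_sum, Finset.smul_sum]
      simp only [map_smul, coneOp_single]
      have hrw2 : ∀ v ∈ s, (csgn s v : K) • (if a ∈ s.erase v then 0 else
          (csgn (s.erase v) a : K) • Finsupp.single (insert a (s.erase v)) (1 : K))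
          = ((csgn s v : K) * csgn (s.erase v) a) • Finsupp.single (insert a (s.erase v)) 1 := by
        intro v hv
        rw [if_neg (fun hm => has (Finset.mem_of_mem_erase hm)), smul_smul]
      rw [Finset.sum_congr rfl hrw2]
      have hrw1 : ∀ v ∈ s, (csgn s a : K) • ((csgn (insert a s) v : K) •
            Finsupp.single ((insert a s).erase v) (1 : K))
          = -(((csgn s v : K) * csgn (s.erase v) a) • Finsupp.single (insert a (s.erase v)) 1) := by
        intro v hv
        have hva : v ≠ a := fun h => has (h ▸ hv)
        rw [Finset.erase_insert_of_ne (Ne.symm hva), smul_smul, ← neg_smul]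
        congr 1
        rw [csgn_insert has, csgn_erase (K := K) (Ne.symm hva)]
        rcases lt_or_gt_of_ne hva with h | h
        · rw [if_neg (not_lt.2 h.le), if_pos ⟨hv, h⟩]; ring
        · rw [if_pos h, if_neg (by rintro ⟨-, h2⟩; exact absurd h2 (not_lt.2 h.le))]; ring
      rw [Finset.sum_congr rfl hrw1, Finset.sum_neg_distrib]
      abel
  calc bd K (coneOp a x) + coneOp a (bd K x)
      = ((bd K).comp (coneOp a) + (coneOp a).comp (bd K)) x := rfl
    _ = x := by rw [key]; rfl

variable (K)

/-- The faces of dimension `n` (cardinality `n+1`). -/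
def Fs {U : Type*} (Δ : SComplex U) (n : ℤ) : Set (Finset U) :=
  {s | s ∈ Δ.faces ∧ (s.card : ℤ) = n + 1}

lemma chains_eq_supported {U : Type*} (Δ : SComplex U) (n : ℤ) :
    Δ.chains K n = Finsupp.supported K K (Fs Δ n) := by
  rw [Finsupp.supported_eq_span_single, SComplex.chains]
  congr 1
  ext f
  constructor
  · rintro ⟨s, hs, hc, rfl⟩; exact ⟨s, ⟨hs, hc⟩, rfl⟩
  · rintro ⟨s, ⟨hs, hc⟩, rfl⟩; exact ⟨s, hs, hc, rfl⟩

lemma mem_chains_single {U : Type*} {Δ : SComplex U} {s : Finset U} {n : ℤ}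
    (hs : s ∈ Δ.faces) (hc : (s.card : ℤ) = n + 1) :
    Finsupp.single s (1 : K) ∈ Δ.chains K n :=
  Submodule.subset_span ⟨s, hs, hc, rfl⟩

lemma bd_mem_chains {Δ : SComplex U} {n : ℤ} {x : Finset U →₀ K}
    (hx : x ∈ Δ.chains K (n + 1)) : bd K x ∈ Δ.chains K n := by
  induction hx using Submodule.span_induction with
  | mem f hf =>
    obtain ⟨s, hs, hc, rfl⟩ := hf
    rw [bd_single]
    apply Submodule.sum_mem
    intro v hv
    apply Submodule.smul_mem
    apply mem_chains_single
    · exact Δ.down_closed hs (Finset.erase_subset v s)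
    · rw [Finset.card_erase_of_mem hv]
      have h1 : 1 ≤ s.card := Finset.card_pos.2 ⟨v, hv⟩
      push_cast [h1]
      omega
  | zero => simp
  | add x y _ _ hx hy => rw [map_add]; exact Submodule.add_mem _ hx hy
  | smul c x _ hx => rw [map_smul]; exact Submodule.smul_mem _ c hx

lemma coneOp_mem_chains {Δ : SComplex U} {a : U}
    (hc : ∀ s ∈ Δ.faces, insert a s ∈ Δ.faces) {n : ℤ} {x : Finset U →₀ K}
    (hx : x ∈ Δ.chains K n) : (coneOp a : (Finset U →₀ K) →ₗ[K] _) x ∈ Δ.chains K (n + 1) := by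
  induction hx using Submodule.span_induction with
  | mem f hf =>
    obtain ⟨s, hs, hcard, rfl⟩ := hf
    rw [coneOp_single]
    by_cases has : a ∈ s
    · rw [if_pos has]; exact Submodule.zero_mem _
    · rw [if_neg has]
      apply Submodule.smul_mem
      apply mem_chains_single
      · exact hc s hs
      · rw [Finset.card_insert_of_notMem has]; push_cast; omega
  | zero => simp
  | add x y _ _ hx hy => rw [map_add]; exact Submodule.add_mem _ hx hy
  | smul c x _ hx => rw [map_smul]; exact Submodule.smul_mem _ c hx

/-- Reduced homology of a cone vanishes: cycles = boundaries. -/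
lemma cone_cycles_eq_boundaries {Δ : SComplex U} {a : U}
    (hc : ∀ s ∈ Δ.faces, insert a s ∈ Δ.faces) (n : ℤ) :
    Δ.chains K n ⊓ LinearMap.ker (bd K) = (Δ.chains K (n + 1)).map (bd K) := by
  apply le_antisymm
  · rintro x ⟨hx, hker⟩
    refine ⟨(coneOp a : (Finset U →₀ K) →ₗ[K] _) x, coneOp_mem_chains K hc hx, ?_⟩
    have := cone_identity a x
    rw [LinearMap.mem_ker.1 hker, map_zero, add_zero] at this
    exact this
  · rintro x ⟨y, hy, rfl⟩
    exact ⟨bd_mem_chains K hy, LinearMap.mem_ker.2 (bd_bd y)⟩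

lemma boundaries_le_cycles (Δ : SComplex U) (n : ℤ) :
    (Δ.chains K (n + 1)).map (bd K) ≤ Δ.chains K n ⊓ LinearMap.ker (bd K) := by
  rintro x ⟨y, hy, rfl⟩
  exact ⟨bd_mem_chains K hy, LinearMap.mem_ker.2 (bd_bd y)⟩

end Cone
section RankLemma
variable {K M M' : Type*} [Field K] [AddCommGroup M] [Module K M]
  [AddCommGroup M'] [Module K M'] [FiniteDimensional K M] [FiniteDimensional K M']

open Module Submodule

lemma finrank_map_mkQ_add (B' S : Submodule K M') :
    finrank K ↥(S.map B'.mkQ) + finrank K ↥B' = finrank K ↥(S ⊔ B') := by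
  have h1 : S.map B'.mkQ = (S ⊔ B').map B'.mkQ := by
    rw [Submodule.map_sup]
    have : B'.map B'.mkQ = ⊥ := by
      rw [Submodule.eq_bot_iff]
      rintro x ⟨y, hy, rfl⟩
      simpa [Submodule.mkQ_apply, Submodule.Quotient.mk_eq_zero] using hy
    rw [this, sup_bot_eq]
  set T := S ⊔ B' with hT
  have h2 := LinearMap.finrank_range_add_finrank_ker (B'.mkQ.comp T.subtype)
  have hrange : LinearMap.range (B'.mkQ.comp T.subtype) = T.map B'.mkQ := by
    rw [LinearMap.range_comp, Submodule.range_subtype]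
  have hker : LinearMap.ker (B'.mkQ.comp T.subtype) = comap T.subtype B' := by
    ext x
    simp [Submodule.mkQ_apply, Submodule.Quotient.mk_eq_zero]
  have hBle : B' ≤ T := le_sup_right
  have hkerrank : finrank K ↥(LinearMap.ker (B'.mkQ.comp T.subtype)) = finrank K ↥B' := by
    rw [hker]
    exact (Submodule.comapSubtypeEquivOfLe hBle).finrank_eq
  rw [hrange, hkerrank, ← h1] at h2
  exact h2

lemma rank_lemma (f : M →ₗ[K] M') (Z : Submodule K M) (B' : Submodule K M') :
    finrank K ↥Z + finrank K ↥B'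
      = finrank K ↥(Z ⊓ Submodule.comap f B') + finrank K ↥(Z.map f ⊔ B') := by
  set g : ↥Z →ₗ[K] M' ⧸ B' := (B'.mkQ.comp f).comp Z.subtype with hg
  have h2 := LinearMap.finrank_range_add_finrank_ker g
  have hker : LinearMap.ker g = comap Z.subtype (Z ⊓ Submodule.comap f B') := by
    ext x
    simp only [hg, LinearMap.mem_ker, LinearMap.comp_apply, Submodule.mem_comap,
      Submodule.mkQ_apply, Submodule.Quotient.mk_eq_zero, Submodule.coe_subtype,
      Submodule.mem_inf]
    exact ⟨fun h => ⟨x.2, h⟩, fun h => h.2⟩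
  have hkerrank : finrank K ↥(LinearMap.ker g) = finrank K ↥(Z ⊓ Submodule.comap f B') := by
    rw [hker]
    exact (Submodule.comapSubtypeEquivOfLe inf_le_left).finrank_eq
  have hrange : LinearMap.range g = (Z.map f).map B'.mkQ := by
    rw [hg, LinearMap.comp_assoc, LinearMap.range_comp, LinearMap.range_comp,
      Submodule.range_subtype]
  have h3 := finrank_map_mkQ_add B' (Z.map f)
  rw [hrange] at h2
  omega

end RankLemma

section Proj
variable {K : Type*} [Field K] {U : Type*}

open Finsupp

/-- Projection onto the coordinates in `S`. -/
noncomputable def projSupp (S : Set (Finset U)) : (Finset U →₀ K) →ₗ[K] (Finset U →₀ K) :=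
  letI : DecidablePred (· ∈ S) := fun s => Classical.propDecidable _
  { toFun := fun x => x.filter (· ∈ S)
    map_add' := fun x y => Finsupp.filter_add
    map_smul' := fun c x => Finsupp.filter_smul }

lemma projSupp_mem_supported {S T : Set (Finset U)} {x : Finset U →₀ K}
    (hx : x ∈ supported K K T) :
    (projSupp S : (Finset U →₀ K) →ₗ[K] _) x ∈ supported K K (T ∩ S) := by
  classical
  rw [Finsupp.mem_supported] at hx ⊢
  intro s hs
  simp only [projSupp, LinearMap.coe_mk, AddHom.coe_mk] at hs
  rw [Finset.mem_coe, Finsupp.support_filter, Finset.mem_filter] at hs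
  exact ⟨hx hs.1, hs.2⟩

lemma sub_projSupp_mem_supported {S T : Set (Finset U)} {x : Finset U →₀ K}
    (hx : x ∈ supported K K T) :
    x - (projSupp S : (Finset U →₀ K) →ₗ[K] _) x ∈ supported K K (T \ S) := by
  classical
  rw [Finsupp.mem_supported] at hx ⊢
  intro s hs
  rw [Finset.mem_coe, Finsupp.mem_support_iff] at hs
  have hxs : (x - (projSupp S : (Finset U →₀ K) →ₗ[K] _) x) s = if s ∈ S then 0 else x s := by
    simp only [projSupp, LinearMap.coe_mk, AddHom.coe_mk, Finsupp.sub_apply,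
      Finsupp.filter_apply]
    split <;> simp
  rw [hxs] at hs
  by_cases hsS : s ∈ S
  · simp [hsS] at hs
  · rw [if_neg hsS] at hs
    exact ⟨hx (Finsupp.mem_support_iff.2 hs), hsS⟩

lemma projSupp_eq_self {S : Set (Finset U)} {x : Finset U →₀ K}
    (hx : x ∈ supported K K S) :
    (projSupp S : (Finset U →₀ K) →ₗ[K] _) x = x := by
  classical
  rw [Finsupp.mem_supported] at hx
  ext s
  simp only [projSupp, LinearMap.coe_mk, AddHom.coe_mk, Finsupp.filter_apply]
  split_ifs with h
  · rfl
  · by_contra hne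
    exact h (hx (Finsupp.mem_support_iff.2 fun h0 => hne h0.symm))

end Proj
section MV
variable {K : Type*} [Field K] {U : Type*} [DecidableEq U] [LinearOrder U] [Fintype U]

open Module Finsupp

lemma chains_mono {Γ Γ' : SComplex U} (h : Γ.faces ⊆ Γ'.faces) (n : ℤ) :
    Γ.chains K n ≤ Γ'.chains K n := by
  rw [chains_eq_supported, chains_eq_supported]
  exact Finsupp.supported_mono (fun s hs => ⟨h hs.1, hs.2⟩)

lemma mv_main (Δ A B I : SComplex U) (a b : U)
    (hA : ∀ s ∈ A.faces, insert a s ∈ A.faces)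
    (hB : ∀ s ∈ B.faces, insert b s ∈ B.faces)
    (hUnion : Δ.faces = A.faces ∪ B.faces)
    (hInter : A.faces ∩ B.faces = I.faces) (k : ℤ) :
    finrank K ↥(Δ.chains K k ⊓ LinearMap.ker (bd K))
        - finrank K ↥((Δ.chains K (k+1)).map (bd K))
      = finrank K ↥(I.chains K (k-1) ⊓ LinearMap.ker (bd K))
        - finrank K ↥((I.chains K k).map (bd K)) := by
  have hAΔ : A.faces ⊆ Δ.faces := hUnion ▸ Set.subset_union_left
  have hBΔ : B.faces ⊆ Δ.faces := hUnion ▸ Set.subset_union_right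
  have hIA : I.faces ⊆ A.faces := hInter ▸ Set.inter_subset_left
  have hIB : I.faces ⊆ B.faces := hInter ▸ Set.inter_subset_right
  set P : (Finset U →₀ K) →ₗ[K] (Finset U →₀ K) := projSupp A.faces with hP
  set D : (Finset U →₀ K) →ₗ[K] (Finset U →₀ K) := (bd K).comp P with hD
  -- basic chain-level facts
  have h1 : ∀ (m : ℤ) (x : Finset U →₀ K), x ∈ Δ.chains K m → P x ∈ A.chains K m := by
    intro m x hx
    rw [chains_eq_supported] at hx ⊢
    refine Finsupp.supported_mono ?_ (projSupp_mem_supported hx)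
    rintro s ⟨⟨hsΔ, hcard⟩, hsA⟩; exact ⟨hsA, hcard⟩
  have h2 : ∀ (m : ℤ) (x : Finset U →₀ K), x ∈ Δ.chains K m → x - P x ∈ B.chains K m := by
    intro m x hx
    rw [chains_eq_supported] at hx ⊢
    refine Finsupp.supported_mono ?_ (sub_projSupp_mem_supported hx)
    rintro s ⟨⟨hsΔ, hcard⟩, hsA⟩
    rcases (hUnion ▸ hsΔ : s ∈ A.faces ∪ B.faces) with h | h
    · exact absurd h hsA
    · exact ⟨h, hcard⟩
  have h3 : ∀ (m : ℤ) (x : Finset U →₀ K), x ∈ A.chains K m → P x = x := by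
    intro m x hx
    rw [chains_eq_supported] at hx
    exact projSupp_eq_self (Finsupp.supported_mono (fun s hs => hs.1) hx)
  have h4 : ∀ (m : ℤ) (x : Finset U →₀ K), x ∈ B.chains K m → P x ∈ I.chains K m := by
    intro m x hx
    rw [chains_eq_supported] at hx ⊢
    refine Finsupp.supported_mono ?_ (projSupp_mem_supported hx)
    rintro s ⟨⟨hsB, hcard⟩, hsA⟩
    exact ⟨hInter ▸ ⟨hsA, hsB⟩, hcard⟩
  have hk1 : k - 1 + 1 = k := by ring
  -- the two submodule identities
  set ZΔ := Δ.chains K k ⊓ LinearMap.ker (bd K) with hZΔ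
  set BI := (I.chains K k).map (bd K) with hBI
  have hDZ : ∀ x ∈ ZΔ, D x ∈ I.chains K (k-1) ⊓ LinearMap.ker (bd K) := by
    rintro x ⟨hxc, hxk⟩
    have hPx : P x ∈ A.chains K k := h1 k x hxc
    have hdPA : bd K (P x) ∈ A.chains K (k-1) := by
      apply bd_mem_chains
      rwa [hk1]
    have hdPB : bd K (P x) ∈ B.chains K (k-1) := by
      have hxP : x - P x ∈ B.chains K k := h2 k x hxc
      have : bd K (x - P x) ∈ B.chains K (k-1) := by
        apply bd_mem_chains; rwa [hk1]
      rw [map_sub, LinearMap.mem_ker.1 hxk, zero_sub] at this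
      simpa using Submodule.neg_mem _ this
    refine ⟨?_, LinearMap.mem_ker.2 (bd_bd _)⟩
    have hint : A.chains K (k-1) ⊓ B.chains K (k-1) = I.chains K (k-1) := by
      rw [chains_eq_supported, chains_eq_supported, chains_eq_supported (U := U) K I,
        ← Finsupp.supported_inter]
      congr 1
      ext s
      constructor
      · rintro ⟨⟨h1', h2'⟩, ⟨h3', _⟩⟩; exact ⟨hInter ▸ ⟨h1', h3'⟩, h2'⟩
      · rintro ⟨hsI, hcard⟩; exact ⟨⟨hIA hsI, hcard⟩, hIB hsI, hcard⟩
    exact hint ▸ Submodule.mem_inf.2 ⟨hdPA, hdPB⟩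
  have claim1 : ZΔ.map D ⊔ BI = I.chains K (k-1) ⊓ LinearMap.ker (bd K) := by
    apply le_antisymm
    · apply sup_le
      · rintro _ ⟨x, hx, rfl⟩; exact hDZ x hx
      · rintro _ ⟨y, hy, rfl⟩
        refine ⟨?_, LinearMap.mem_ker.2 (bd_bd _)⟩
        apply bd_mem_chains; rwa [hk1]
    · rintro z' ⟨hz'c, hz'k⟩
      have hz'A : z' ∈ A.chains K (k-1) ⊓ LinearMap.ker (bd K) :=
        ⟨chains_mono hIA (k-1) hz'c, hz'k⟩
      have hz'B : z' ∈ B.chains K (k-1) ⊓ LinearMap.ker (bd K) :=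
        ⟨chains_mono hIB (k-1) hz'c, hz'k⟩
      rw [cone_cycles_eq_boundaries K hA (k-1)] at hz'A
      rw [cone_cycles_eq_boundaries K hB (k-1)] at hz'B
      rw [hk1] at hz'A hz'B
      obtain ⟨α, hα, hαd⟩ := hz'A
      obtain ⟨β, hβ, hβd⟩ := hz'B
      have hzmem : α - β ∈ ZΔ := by
        refine Submodule.mem_inf.2 ⟨Submodule.sub_mem _ (chains_mono hAΔ k hα)
          (chains_mono hBΔ k hβ), ?_⟩
        rw [LinearMap.mem_ker, map_sub, hαd, hβd, sub_self]
      have hPβI : P β ∈ I.chains K k := h4 k β hβ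
      have hDz : D (α - β) = z' - bd K (P β) := by
        rw [hD, LinearMap.comp_apply, map_sub, h3 k α hα, map_sub, hαd]
      rw [Submodule.mem_sup]
      exact ⟨D (α - β), Submodule.mem_map_of_mem hzmem, bd K (P β),
        Submodule.mem_map_of_mem hPβI, by rw [hDz]; abel⟩
  have claim2 : ZΔ ⊓ Submodule.comap D BI = (Δ.chains K (k+1)).map (bd K) := by
    apply le_antisymm
    · rintro z ⟨⟨hzc, hzk⟩, hzD⟩
      obtain ⟨w, hw, hwd⟩ := (hzD : D z ∈ BI)
      -- α' := P z - w is a cycle in A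
      have hα' : P z - w ∈ A.chains K k ⊓ LinearMap.ker (bd K) := by
        refine Submodule.mem_inf.2 ⟨Submodule.sub_mem _ (h1 k z hzc) (chains_mono hIA k hw), ?_⟩
        rw [LinearMap.mem_ker, map_sub, hwd, hD, LinearMap.comp_apply, sub_self]
      rw [cone_cycles_eq_boundaries K hA k] at hα'
      obtain ⟨α, hαc, hαd⟩ := hα'
      -- β' := (z - P z) + w is a cycle in B
      have hβ' : (z - P z) + w ∈ B.chains K k ⊓ LinearMap.ker (bd K) := by
        refine Submodule.mem_inf.2 ⟨Submodule.add_mem _ (h2 k z hzc) (chains_mono hIB k hw), ?_⟩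
        rw [LinearMap.mem_ker, map_add, map_sub, LinearMap.mem_ker.1 hzk, hwd, hD,
          LinearMap.comp_apply, zero_sub, neg_add_cancel]
      rw [cone_cycles_eq_boundaries K hB k] at hβ'
      obtain ⟨β, hβc, hβd⟩ := hβ'
      refine ⟨α + β, Submodule.add_mem _ (chains_mono hAΔ (k+1) hαc)
        (chains_mono hBΔ (k+1) hβc), ?_⟩
      rw [map_add, hαd, hβd]
      abel
    · rintro _ ⟨c, hc, rfl⟩
      have hbdc : bd K c ∈ Δ.chains K k := bd_mem_chains K hc
      refine Submodule.mem_inf.2 ⟨Submodule.mem_inf.2 ⟨hbdc, LinearMap.mem_ker.2 (bd_bd c)⟩, ?_⟩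
      rw [Submodule.mem_comap]
      -- D (bd c) = bd u  with  u = P (bd c) - bd (P c) ∈ chains I k
      have huA : P (bd K c) - bd K (P c) ∈ A.chains K k := by
        refine Submodule.sub_mem _ (h1 k _ hbdc) (bd_mem_chains K (h1 (k+1) c hc))
      have huB : P (bd K c) - bd K (P c) ∈ B.chains K k := by
        have e1 : bd K (c - P c) ∈ B.chains K k := bd_mem_chains K (h2 (k+1) c hc)
        have e2 : bd K c - P (bd K c) ∈ B.chains K k := h2 k _ hbdc
        have : P (bd K c) - bd K (P c)
            = bd K (c - P c) - (bd K c - P (bd K c)) := by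
          rw [map_sub]; abel
        rw [this]
        exact Submodule.sub_mem _ e1 e2
      have huI : P (bd K c) - bd K (P c) ∈ I.chains K k := by
        have hint : A.chains K k ⊓ B.chains K k = I.chains K k := by
          rw [chains_eq_supported, chains_eq_supported, chains_eq_supported (U := U) K I,
            ← Finsupp.supported_inter]
          congr 1
          ext s
          constructor
          · rintro ⟨⟨h1', h2'⟩, ⟨h3', _⟩⟩; exact ⟨hInter ▸ ⟨h1', h3'⟩, h2'⟩
          · rintro ⟨hsI, hcard⟩; exact ⟨⟨hIA hsI, hcard⟩, hIB hsI, hcard⟩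
        exact hint ▸ Submodule.mem_inf.2 ⟨huA, huB⟩
      refine ⟨P (bd K c) - bd K (P c), huI, ?_⟩
      rw [map_sub, bd_bd, sub_zero, hD, LinearMap.comp_apply]
  have hrl := rank_lemma D ZΔ BI
  rw [claim1, claim2] at hrl
  have mono1 : (Δ.chains K (k+1)).map (bd K) ≤ ZΔ := boundaries_le_cycles K Δ k
  have mono2 : BI ≤ I.chains K (k-1) ⊓ LinearMap.ker (bd K) := by
    have := boundaries_le_cycles K I (k-1)
    rwa [hk1] at this
  have f1 := Submodule.finrank_mono mono1
  have f2 := Submodule.finrank_mono mono2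
  omega

end MV
section Relabel
variable {K : Type*} [Field K] {U U' : Type*} [DecidableEq U] [LinearOrder U]
  [DecidableEq U'] [LinearOrder U']

open Finsupp Module

/-- Number of order inversions of `f` on `s`. -/
def invCount (f : U ↪ U') (s : Finset U) : ℕ :=
  ∑ y ∈ s, (s.filter (fun x => x < y ∧ f y < f x)).card

/-- Sign of the permutation relating the orders on `s` and on `s.map f`. -/
def esgn (f : U ↪ U') (s : Finset U) : K := (-1) ^ invCount f s

lemma esgn_mul_self (f : U ↪ U') (s : Finset U) : (esgn f s : K) * esgn f s = 1 := by
  rw [esgn, ← pow_add, ← two_mul, pow_mul]; simp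

lemma invCount_erase (f : U ↪ U') {s : Finset U} {v : U} (hv : v ∈ s) :
    invCount f s = invCount f (s.erase v)
      + ((s.erase v).filter (fun x => x < v ∧ f v < f x)).card
      + ((s.erase v).filter (fun y => v < y ∧ f y < f v)).card := by
  set t := s.erase v with ht
  have hvt : v ∉ t := Finset.notMem_erase v s
  have hs : s = insert v t := by rw [ht, Finset.insert_erase hv]
  rw [invCount, hs, Finset.sum_insert hvt]
  have e1 : (insert v t).filter (fun x => x < v ∧ f v < f x)
      = t.filter (fun x => x < v ∧ f v < f x) := by
    rw [Finset.filter_insert, if_neg (by simp)]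
  have e2 : ∀ y ∈ t, ((insert v t).filter (fun x => x < y ∧ f y < f x)).card
      = (t.filter (fun x => x < y ∧ f y < f x)).card
        + (if v < y ∧ f y < f v then 1 else 0) := by
    intro y _
    rw [Finset.filter_insert]
    split_ifs with h
    · rw [Finset.card_insert_of_notMem (fun hm => hvt (Finset.mem_filter.1 hm).1)]
    · rw [add_zero]
  rw [e1, Finset.sum_congr rfl e2, Finset.sum_add_distrib, ← Finset.card_filter]
  unfold t
  simp only [invCount]
  omega

lemma card_lt_split (f : U ↪ U') {s : Finset U} {v : U} (hv : v ∈ s) :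
    (s.filter (fun x => x < v)).card
      = ((s.erase v).filter (fun x => x < v ∧ f x < f v)).card
        + ((s.erase v).filter (fun x => x < v ∧ f v < f x)).card := by
  set t := s.erase v with ht
  have hvt : v ∉ t := Finset.notMem_erase v s
  have hs : s = insert v t := by rw [ht, Finset.insert_erase hv]
  rw [hs, Finset.filter_insert, if_neg (by simp)]
  classical
  have := Finset.card_filter_add_card_filter_not
    (s := t.filter (fun x => x < v)) (fun x => f x < f v)
  rw [Finset.filter_filter, Finset.filter_filter] at this
  have hcongr : t.filter (fun x => x < v ∧ ¬ f x < f v)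
      = t.filter (fun x => x < v ∧ f v < f x) := by
    apply Finset.filter_congr
    intro x hx
    have hxv : x ≠ v := Finset.ne_of_mem_erase (ht ▸ hx)
    have : f x ≠ f v := fun h => hxv (f.injective h)
    constructor
    · rintro ⟨h1, h2⟩; exact ⟨h1, lt_of_le_of_ne (not_lt.1 h2) (Ne.symm this)⟩
    · rintro ⟨h1, h2⟩; exact ⟨h1, not_lt.2 h2.le⟩
  rw [hcongr] at this
  omega

lemma card_lt_split' (f : U ↪ U') {s : Finset U} {v : U} (hv : v ∈ s) :
    ((s.map f).filter (fun x => x < f v)).card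
      = ((s.erase v).filter (fun x => x < v ∧ f x < f v)).card
        + ((s.erase v).filter (fun y => v < y ∧ f y < f v)).card := by
  set t := s.erase v with ht
  have hvt : v ∉ t := Finset.notMem_erase v s
  have hs : s = insert v t := by rw [ht, Finset.insert_erase hv]
  have hmap : ((s.map f).filter (fun x => x < f v)).card
      = (s.filter (fun x => f x < f v)).card := by
    rw [Finset.filter_map, Finset.card_map]; rfl
  rw [hmap, hs, Finset.filter_insert, if_neg (by simp)]
  classical
  have := Finset.card_filter_add_card_filter_not
    (s := t.filter (fun x => f x < f v)) (fun x => x < v)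
  rw [Finset.filter_filter, Finset.filter_filter] at this
  have hc1 : t.filter (fun x => f x < f v ∧ x < v) = t.filter (fun x => x < v ∧ f x < f v) := by
    apply Finset.filter_congr; intro x _; exact ⟨fun h => ⟨h.2, h.1⟩, fun h => ⟨h.2, h.1⟩⟩
  have hc2 : t.filter (fun x => f x < f v ∧ ¬ x < v)
      = t.filter (fun y => v < y ∧ f y < f v) := by
    apply Finset.filter_congr
    intro x hx
    have hxv : x ≠ v := Finset.ne_of_mem_erase (ht ▸ hx)
    constructor
    · rintro ⟨h1, h2⟩; exact ⟨lt_of_le_of_ne (not_lt.1 h2) (Ne.symm hxv), h1⟩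
    · rintro ⟨h1, h2⟩; exact ⟨h2, not_lt.2 h1.le⟩
  rw [hc1, hc2] at this
  omega

/-- The key sign identity for relabelling. -/
lemma esgn_csgn (f : U ↪ U') {s : Finset U} {v : U} (hv : v ∈ s) :
    (esgn f s : K) * csgn (s.map f) (f v) = esgn f (s.erase v) * csgn s v := by
  rw [esgn, esgn, csgn, csgn]
  have h1 := invCount_erase f hv
  have h2 := card_lt_split f hv
  have h3 := card_lt_split' f hv
  rw [← pow_add, ← pow_add]
  have : invCount f s + ((s.map f).filter (fun x => x < f v)).card
      = (invCount f (s.erase v) + (s.filter (fun x => x < v)).card)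
        + 2 * ((s.erase v).filter (fun y => v < y ∧ f y < f v)).card := by
    omega
  rw [this, pow_add, pow_mul]
  simp

/-- The sign-twisting diagonal operator. -/
noncomputable def dsgn (f : U ↪ U') : (Finset U →₀ K) →ₗ[K] (Finset U →₀ K) :=
  Finsupp.lsum K fun s => LinearMap.toSpanSingleton K _ ((esgn f s : K) • Finsupp.single s 1)

/-- The chain transport operator along `f`. -/
noncomputable def transport (f : U ↪ U') : (Finset U →₀ K) →ₗ[K] (Finset U' →₀ K) :=
  (Finsupp.lmapDomain K K (fun s : Finset U => s.map f)).comp (dsgn f)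

lemma transport_single (f : U ↪ U') (s : Finset U) :
    (transport f : (Finset U →₀ K) →ₗ[K] _) (Finsupp.single s 1)
      = (esgn f s : K) • Finsupp.single (s.map f) 1 := by
  simp [transport, dsgn, Finsupp.lsum_single, LinearMap.toSpanSingleton_apply,
    Finsupp.lmapDomain_apply, map_smul, Finsupp.mapDomain_single]

lemma transport_injective (f : U ↪ U') :
    Function.Injective (transport f : (Finset U →₀ K) →ₗ[K] _) := by
  apply Function.Injective.comp (g := Finsupp.mapDomain (fun s : Finset U => s.map f))
  · exact Finsupp.mapDomain_injective (Finset.map_injective f)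
  · -- dsgn is an involution
    have hinv : ∀ x : Finset U →₀ K,
        (dsgn f : (Finset U →₀ K) →ₗ[K] _) ((dsgn f : (Finset U →₀ K) →ₗ[K] _) x) = x := by
      intro x
      have key : ((dsgn f).comp (dsgn f) : (Finset U →₀ K) →ₗ[K] _) = LinearMap.id := by
        apply Finsupp.lhom_ext
        intro s b
        have hb : Finsupp.single s b = b • Finsupp.single s (1 : K) := by
          rw [Finsupp.smul_single, smul_eq_mul, mul_one]
        rw [hb]
        simp only [LinearMap.comp_apply, map_smul, LinearMap.id_apply]
        congr 1
        have h1 : (dsgn f : (Finset U →₀ K) →ₗ[K] _) (Finsupp.single s 1)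
            = (esgn f s : K) • Finsupp.single s 1 := by
          simp [dsgn, Finsupp.lsum_single, LinearMap.toSpanSingleton_apply]
        rw [h1, map_smul, h1, smul_smul, esgn_mul_self, one_smul]
      exact LinearMap.congr_fun key x
    intro x y hxy
    rw [← hinv x, ← hinv y, hxy]

lemma transport_comm_op (f : U ↪ U') :
    ((transport f).comp (bd K) : (Finset U →₀ K) →ₗ[K] _)
      = (bd K).comp (transport f) := by
  apply Finsupp.lhom_ext
  intro s b
  have hb : Finsupp.single s b = b • Finsupp.single s (1 : K) := by
    rw [Finsupp.smul_single, smul_eq_mul, mul_one]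
  rw [hb]
  simp only [LinearMap.comp_apply, map_smul]
  congr 1
  rw [bd_single, map_sum, transport_single, map_smul, bd_single, Finset.smul_sum,
    Finset.sum_map]
  simp only [map_smul, transport_single]
  refine Finset.sum_congr rfl fun v hv => ?_
  rw [Finset.map_erase, smul_smul, smul_smul, mul_comm ((csgn s v : K)) _,
    esgn_csgn f hv, mul_comm]

lemma transport_comm (f : U ↪ U') (x : Finset U →₀ K) :
    (transport f : (Finset U →₀ K) →ₗ[K] _) (bd K x)
      = bd K ((transport f : (Finset U →₀ K) →ₗ[K] _) x) :=
  LinearMap.congr_fun (transport_comm_op f) x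

lemma transport_chains (f : U ↪ U') (Δ : SComplex U) (Δ' : SComplex U')
    (hfaces : Δ'.faces = (fun s : Finset U => s.map f) '' Δ.faces) (n : ℤ) :
    (Δ.chains K n).map (transport f) = Δ'.chains K n := by
  apply le_antisymm
  · rw [Submodule.map_le_iff_le_comap]
    rw [SComplex.chains, Submodule.span_le]
    rintro x ⟨s, hs, hc, rfl⟩
    rw [SetLike.mem_coe, Submodule.mem_comap, transport_single]
    apply Submodule.smul_mem
    apply mem_chains_single
    · rw [hfaces]; exact ⟨s, hs, rfl⟩
    · rw [Finset.card_map]; exact hc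
  · rw [SComplex.chains, Submodule.span_le]
    rintro x ⟨t, ht, hc, rfl⟩
    rw [hfaces] at ht
    obtain ⟨s, hs, rfl⟩ := ht
    rw [SetLike.mem_coe]
    have : Finsupp.single (s.map f) (1 : K)
        = (esgn f s : K) • (transport f : (Finset U →₀ K) →ₗ[K] _) (Finsupp.single s 1) := by
      rw [transport_single, smul_smul, esgn_mul_self, one_smul]
    rw [this]
    apply Submodule.smul_mem
    apply Submodule.mem_map_of_mem
    apply mem_chains_single K hs
    rw [Finset.card_map] at hc
    exact hc

lemma bd_rhd_iso (f : U ↪ U') (Δ : SComplex U) (Δ' : SComplex U')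
    (hfaces : Δ'.faces = (fun s : Finset U => s.map f) '' Δ.faces) (n : ℤ) :
    finrank K ↥(Δ.chains K n ⊓ LinearMap.ker (bd K))
        - finrank K ↥((Δ.chains K (n+1)).map (bd K))
      = finrank K ↥(Δ'.chains K n ⊓ LinearMap.ker (bd K))
        - finrank K ↥((Δ'.chains K (n+1)).map (bd K)) := by
  have hinj := transport_injective (K := K) f
  have hZ : (Δ.chains K n ⊓ LinearMap.ker (bd K)).map (transport f)
      = Δ'.chains K n ⊓ LinearMap.ker (bd K) := by
    apply le_antisymm
    · rintro _ ⟨x, ⟨hxc, hxk⟩, rfl⟩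
      refine Submodule.mem_inf.2 ⟨?_, ?_⟩
      · rw [← transport_chains (K := K) f Δ Δ' hfaces n]
        exact Submodule.mem_map_of_mem hxc
      · rw [LinearMap.mem_ker, ← transport_comm, LinearMap.mem_ker.1 hxk, map_zero]
    · rintro y ⟨hyc, hyk⟩
      rw [← transport_chains (K := K) f Δ Δ' hfaces n] at hyc
      obtain ⟨x, hx, rfl⟩ := hyc
      refine ⟨x, Submodule.mem_inf.2 ⟨hx, ?_⟩, rfl⟩
      rw [LinearMap.mem_ker]
      apply hinj
      rw [transport_comm, map_zero]
      exact LinearMap.mem_ker.1 hyk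
  have hB : ((Δ.chains K (n+1)).map (bd K)).map (transport f)
      = (Δ'.chains K (n+1)).map (bd K) := by
    rw [← Submodule.map_comp, transport_comm_op, Submodule.map_comp,
      transport_chains (K := K) f Δ Δ' hfaces (n+1)]
  have e1 : finrank K ↥(Δ.chains K n ⊓ LinearMap.ker (bd K))
      = finrank K ↥((Δ.chains K n ⊓ LinearMap.ker (bd K)).map (transport f)) :=
    LinearEquiv.finrank_eq (Submodule.equivMapOfInjective (transport f) hinj _)
  have e2 : finrank K ↥((Δ.chains K (n+1)).map (bd K))
      = finrank K ↥(((Δ.chains K (n+1)).map (bd K)).map (transport f)) :=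
    LinearEquiv.finrank_eq (Submodule.equivMapOfInjective (transport f) hinj _)
  rw [hZ] at e1
  rw [hB] at e2
  rw [e1, e2]

end Relabel
section Wrappers
variable (K : Type*) [Field K]

lemma rhd_cone_zero {U : Type*} [dU : DecidableEq U] (Δ : SComplex U) (a : U)
    (hc : ∀ s ∈ Δ.faces, insert a s ∈ Δ.faces) (n : ℤ) : rhd K Δ n = 0 := by
  letI := auxOrder U
  have heq : Classical.decEq U = dU := Subsingleton.elim _ _
  rw [SComplex.rhd, bdry_eq_bd, heq, cone_cycles_eq_boundaries K hc n, Nat.sub_self]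

lemma rhd_mv_wrap {U : Type*} [Fintype U] [dU : DecidableEq U] (Δ A B I : SComplex U) (a b : U)
    (hA : ∀ s ∈ A.faces, insert a s ∈ A.faces)
    (hB : ∀ s ∈ B.faces, insert b s ∈ B.faces)
    (hUnion : Δ.faces = A.faces ∪ B.faces)
    (hInter : A.faces ∩ B.faces = I.faces) (k : ℤ) :
    rhd K Δ k = rhd K I (k - 1) := by
  letI := auxOrder U
  have heq : Classical.decEq U = dU := Subsingleton.elim _ _
  rw [SComplex.rhd, SComplex.rhd, bdry_eq_bd, heq]
  have hk : k - 1 + 1 = k := by ring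
  rw [hk]
  exact mv_main Δ A B I a b hA hB hUnion hInter k

lemma rhd_relabel {U U' : Type*} (f : U ↪ U') (Δ : SComplex U) (Δ' : SComplex U')
    (hfaces : Δ'.faces = (fun s : Finset U => s.map f) '' Δ.faces) (n : ℤ) :
    rhd K Δ n = rhd K Δ' n := by
  letI := Classical.decEq U
  letI := auxOrder U
  letI := Classical.decEq U'
  letI := auxOrder U'
  rw [SComplex.rhd, SComplex.rhd, bdry_eq_bd K (U := U), bdry_eq_bd K (U := U')]
  exact bd_rhd_iso f Δ Δ' hfaces n

end Wrappers

section Graphs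
variable (K : Type*) [Field K] {V : Type*} [Fintype V] [DecidableEq V]

lemma indep_vertexFinset (G : SimpleGraph V) :
    (indepComplex G).vertexFinset = Finset.univ := by
  ext u
  simp only [SComplex.vertexFinset, Set.Finite.mem_toFinset, Set.mem_setOf_eq,
    Finset.mem_univ, iff_true]
  intro x hx y hy
  rw [Finset.mem_singleton] at hx hy
  subst hx; subst hy
  exact fun h => G.irrefl h

lemma faces_induce_image (T : SimpleGraph V) (P : V → Prop) [DecidablePred P]
    (W' : Finset {u // P u}) :
    ((indepComplex T).restrict (W'.map (Function.Embedding.subtype P))).faces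
      = (fun s : Finset {u // P u} => s.map (Function.Embedding.subtype P)) ''
        ((indepComplex (T.induce {u | P u})).restrict W').faces := by
  ext t
  constructor
  · rintro ⟨hind, hsub⟩
    obtain ⟨s, hsW, rfl⟩ := Finset.subset_map_iff.1 hsub
    refine ⟨s, ⟨?_, hsW⟩, rfl⟩
    intro a ha b hb hadj
    exact hind a.1 (Finset.mem_map_of_mem _ ha) b.1 (Finset.mem_map_of_mem _ hb) hadj
  · rintro ⟨s, ⟨hind, hsub⟩, rfl⟩
    refine ⟨?_, Finset.map_subset_map.2 hsub⟩
    intro a ha b hb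
    obtain ⟨a', ha', rfl⟩ := Finset.mem_map.1 ha
    obtain ⟨b', hb', rfl⟩ := Finset.mem_map.1 hb
    exact fun h => hind a' ha' b' hb' h

lemma sum_rhd_subtype (T : SimpleGraph V) (P : V → Prop) [DecidablePred P] (m : ℕ) (n : ℤ) :
    ∑ W' ∈ Finset.powersetCard m (Finset.univ : Finset {u // P u}),
        rhd K ((indepComplex (T.induce {u | P u})).restrict W') n
      = ∑ W ∈ Finset.powersetCard m (Finset.univ.filter P),
          rhd K ((indepComplex T).restrict W) n := by
  refine Finset.sum_bij' (fun W' _ => W'.map (Function.Embedding.subtype P))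
    (fun W _ => W.subtype P) ?_ ?_ ?_ ?_ ?_
  · intro W' hW'
    rw [Finset.mem_powersetCard] at hW' ⊢
    refine ⟨?_, by rw [Finset.card_map]; exact hW'.2⟩
    intro u hu
    obtain ⟨a, _, rfl⟩ := Finset.mem_map.1 hu
    simp only [Finset.mem_filter, Finset.mem_univ, true_and, Function.Embedding.coe_subtype]
    exact a.2
  · intro W hW
    rw [Finset.mem_powersetCard] at hW ⊢
    refine ⟨Finset.subset_univ _, ?_⟩
    rw [Finset.card_subtype, Finset.filter_true_of_mem, hW.2]
    intro u hu
    have := hW.1 hu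
    simp only [Finset.mem_filter] at this
    exact this.2
  · intro W' hW'
    show (W'.map (Function.Embedding.subtype P)).subtype P = W'
    ext a
    simp [Finset.mem_subtype, Finset.mem_map, Function.Embedding.coe_subtype,
      Subtype.coe_injective.eq_iff]
  · intro W hW
    show (W.subtype P).map (Function.Embedding.subtype P) = W
    rw [Finset.subtype_map, Finset.filter_true_of_mem]
    intro u hu
    have := (Finset.mem_powersetCard.1 hW).1 hu
    simp only [Finset.mem_filter] at this
    exact this.2
  · intro W' hW'
    exact rhd_relabel K (Function.Embedding.subtype P) _ _
      (faces_induce_image T P W') n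

end Graphs
/-- Recursive formula for the graded Betti numbers of a forest:
`β_{i,d}(T) = β_{i,d}(T') + Σ_{j=0}^{n-1} C(n-1, j) β_{i-(j+1), d-(j+2)}(T'')`, where `v` is a
vertex of the forest `T` with neighbours `v₁, …, v_n` (`n ≥ 2`), `v₁,…,v_{n-1}` of degree one
(`w = v_n` the remaining neighbour), `T' = T \ {v₁}` and `T'' = T \ {v, v₁, …, v_n}`. -/
theorem betti_forest_recursion {V : Type*} [Fintype V] [DecidableEq V] (K : Type*) [Field K]
    (T : SimpleGraph V) [DecidableRel T.Adj] (hT : T.IsAcyclic)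
    (v v₁ w : V) (hadj : T.Adj v v₁) (hw : T.Adj v w) (hne : v₁ ≠ w)
    (hleaf : ∀ u : V, T.Adj v u → u ≠ w → T.degree u = 1) :
    ∀ i d : ℤ,
      bettiG K T i d
        = bettiG K (T.induce {u : V | u ≠ v₁}) i d
          + ∑ j ∈ Finset.range (T.degree v),
              (T.degree v - 1).choose j *
                bettiG K (T.induce {u : V | u ≠ v ∧ ¬ T.Adj v u})
                  (i - ((j : ℤ) + 1)) (d - ((j : ℤ) + 2)) := by
  intro i d
  classical
  -- basic facts about v₁
  have hvv1 : v ≠ v₁ := hadj.ne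
  have hv1nbr : ∀ u : V, T.Adj v₁ u → u = v := by
    intro u hu
    have hdeg : T.degree v₁ = 1 := hleaf v₁ hadj hne
    have hvmem : v ∈ T.neighborFinset v₁ := by
      rw [SimpleGraph.mem_neighborFinset]; exact hadj.symm
    have humem : u ∈ T.neighborFinset v₁ := by
      rw [SimpleGraph.mem_neighborFinset]; exact hu
    obtain ⟨x, hx⟩ := Finset.card_eq_one.1 hdeg
    rw [hx, Finset.mem_singleton] at hvmem humem
    rw [humem, hvmem]
  simp only [bettiG, SComplex.betti, indep_vertexFinset]
  by_cases hd : d < 0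
  · rw [if_pos hd, if_pos hd, zero_add]
    symm
    apply Finset.sum_eq_zero
    intro j _
    rw [if_pos (by have : (0:ℤ) ≤ (j:ℤ) := Int.natCast_nonneg j; omega), mul_zero]
  -- main case
  rw [if_neg hd, if_neg hd]
  set m := d.toNat with hmdef
  have hm : (m : ℤ) = d := Int.toNat_of_nonneg (not_lt.1 hd)
  set N := T.neighborFinset v with hN
  set n := T.degree v with hn
  have hv1N : v₁ ∈ N := by rw [hN, SimpleGraph.mem_neighborFinset]; exact hadj
  have hnpos : 1 ≤ n := by
    rw [hn, ← SimpleGraph.card_neighborFinset_eq_degree]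
    exact Finset.card_pos.2 ⟨v₁, hv1N⟩
  have hNcard : N.card = n := by rw [hn]; exact SimpleGraph.card_neighborFinset_eq_degree T v
  set Nv' := N.erase v₁ with hNv'
  have hNv'card : Nv'.card = n - 1 := by rw [hNv', Finset.card_erase_of_mem hv1N, hNcard]
  set Vrest := Finset.univ.filter (fun u : V => u ≠ v ∧ ¬ T.Adj v u) with hVrest
  have hmemVrest : ∀ u : V, u ∈ Vrest ↔ u ≠ v ∧ ¬ T.Adj v u := by
    intro u; rw [hVrest, Finset.mem_filter]; simp
  have hmemNv' : ∀ u : V, u ∈ Nv' ↔ u ≠ v₁ ∧ T.Adj v u := by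
    intro u; rw [hNv', Finset.mem_erase, hN, SimpleGraph.mem_neighborFinset]
  -- the three parts of the sum
  rw [← Finset.sum_filter_add_sum_filter_not (Finset.powersetCard m Finset.univ)
    (fun W => v₁ ∈ W), ← Finset.sum_filter_add_sum_filter_not
    ((Finset.powersetCard m Finset.univ).filter (fun W => v₁ ∈ W)) (fun W => v ∈ W),
    Finset.filter_filter, Finset.filter_filter]
  -- Part S2 : v₁ ∈ W but v ∉ W gives cones
  have hS2 : ∑ W ∈ (Finset.powersetCard m Finset.univ).filter (fun W => v₁ ∈ W ∧ ¬ v ∈ W),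
      rhd K ((indepComplex T).restrict W) (d - i - 1) = 0 := by
    apply Finset.sum_eq_zero
    intro W hW
    rw [Finset.mem_filter] at hW
    obtain ⟨-, hv1W, hvW⟩ := hW
    apply rhd_cone_zero K _ v₁
    rintro s ⟨hind, hsub⟩
    constructor
    · intro x hx y hy hxy
      rw [Finset.mem_insert] at hx hy
      rcases hx with rfl | hx <;> rcases hy with rfl | hy
      · exact (T.irrefl hxy)
      · exact hvW (hv1nbr y hxy ▸ hsub hy)
      · exact hvW (hv1nbr x hxy.symm ▸ hsub hx)
      · exact hind x hx y hy hxy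
    · exact Finset.insert_subset hv1W hsub
  -- Part S1 : v₁ ∉ W matches T'
  have hS1 : ∑ W ∈ (Finset.powersetCard m Finset.univ).filter (fun W => ¬ v₁ ∈ W),
      rhd K ((indepComplex T).restrict W) (d - i - 1)
      = ∑ W' ∈ Finset.powersetCard m (Finset.univ : Finset {u : V // u ≠ v₁}),
          rhd K ((indepComplex (T.induce {u : V | u ≠ v₁})).restrict W') (d - i - 1) := by
    rw [sum_rhd_subtype K T (fun u => u ≠ v₁) m (d - i - 1)]
    apply Finset.sum_congr
    · ext W
      rw [Finset.mem_filter, Finset.mem_powersetCard, Finset.mem_powersetCard]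
      constructor
      · rintro ⟨⟨-, hcard⟩, hv1⟩
        refine ⟨fun u hu => ?_, hcard⟩
        rw [Finset.mem_filter]
        exact ⟨Finset.mem_univ u, fun h => hv1 (h ▸ hu)⟩
      · rintro ⟨hsub, hcard⟩
        refine ⟨⟨Finset.subset_univ W, hcard⟩, fun hmem => ?_⟩
        have := hsub hmem
        rw [Finset.mem_filter] at this
        exact this.2 rfl
    · intros; rfl
  -- Part S3 : Mayer-Vietoris
  have hB2 : ∀ W ∈ (Finset.powersetCard m Finset.univ).filter (fun W => v₁ ∈ W ∧ v ∈ W),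
      rhd K ((indepComplex T).restrict W) (d - i - 1)
        = rhd K ((indepComplex T).restrict (W ∩ Vrest)) (d - i - 2) := by
    intro W hW
    rw [Finset.mem_filter] at hW
    obtain ⟨-, hv1W, hvW⟩ := hW
    have := rhd_mv_wrap K ((indepComplex T).restrict W)
      ⟨{s | insert v s ∈ (indepComplex T).faces ∧ s ⊆ W}, by
        rintro s t ⟨hs1, hs2⟩ hts
        exact ⟨(indepComplex T).down_closed hs1 (Finset.insert_subset_insert v hts),
          hts.trans hs2⟩⟩
      ((indepComplex T).restrict (W.erase v))
      ((indepComplex T).restrict (W ∩ Vrest)) v v₁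
      (by rintro s ⟨hs1, hs2⟩
          refine ⟨by rwa [Finset.insert_idem], Finset.insert_subset hvW hs2⟩)
      (by rintro s ⟨hs1, hs2⟩
          constructor
          · intro x hx y hy hxy
            rw [Finset.mem_insert] at hx hy
            rcases hx with rfl | hx <;> rcases hy with rfl | hy
            · exact (T.irrefl hxy)
            · exact Finset.notMem_erase v W (hv1nbr y hxy ▸ hs2 hy)
            · exact Finset.notMem_erase v W (hv1nbr x hxy.symm ▸ hs2 hx)
            · exact hs1 x hx y hy hxy
          · exact Finset.insert_subset (Finset.mem_erase.2 ⟨hvv1.symm, hv1W⟩) hs2)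
      (by ext s
          constructor
          · rintro ⟨hind, hsub⟩
            by_cases hvs : v ∈ s
            · left
              exact ⟨by rwa [Finset.insert_eq_self.2 hvs], hsub⟩
            · right
              exact ⟨hind, Finset.subset_erase.2 ⟨hsub, hvs⟩⟩
          · rintro (⟨h1, h2⟩ | ⟨h1, h2⟩)
            · exact ⟨(indepComplex T).down_closed h1 (Finset.subset_insert v s), h2⟩
            · exact ⟨h1, h2.trans (Finset.erase_subset v W)⟩)
      (by ext s
          constructor
          · rintro ⟨⟨hins, hsW⟩, ⟨hind, hserase⟩⟩
            refine ⟨hind, fun u hu => Finset.mem_inter.2 ⟨hsW hu, ?_⟩⟩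
            rw [hmemVrest]
            refine ⟨(Finset.mem_erase.1 (hserase hu)).1, fun hadj' => ?_⟩
            exact hins v (Finset.mem_insert_self v s) u (Finset.mem_insert_of_mem hu) hadj'
          · rintro ⟨hind, hsub⟩
            have hsV : ∀ u ∈ s, u ≠ v ∧ ¬ T.Adj v u := by
              intro u hu
              have := (Finset.mem_inter.1 (hsub hu)).2
              rwa [hmemVrest] at this
            refine ⟨⟨?_, fun u hu => (Finset.mem_inter.1 (hsub hu)).1⟩,
              ⟨hind, fun u hu => Finset.mem_erase.2
                ⟨(hsV u hu).1, (Finset.mem_inter.1 (hsub hu)).1⟩⟩⟩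
            intro x hx y hy hxy
            rw [Finset.mem_insert] at hx hy
            rcases hx with rfl | hx <;> rcases hy with rfl | hy
            · exact (T.irrefl hxy)
            · exact (hsV y hy).2 hxy
            · exact (hsV x hx).2 (hxy.symm)
            · exact hind x hx y hy hxy)
      (d - i - 1)
    rw [this]
    congr 1
    ring
  rw [Finset.sum_congr rfl hB2, hS1, hS2, add_zero, add_comm]
  congr 1
  -- now the combinatorial regrouping of the S3 part
  -- category facts
  have hvNv' : v ∉ Nv' := by rw [hmemNv']; rintro ⟨-, h⟩; exact T.irrefl h
  have hv1Nv' : v₁ ∉ Nv' := by rw [hmemNv']; rintro ⟨h, -⟩; exact h rfl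
  have hvVrest : v ∉ Vrest := by rw [hmemVrest]; rintro ⟨h, -⟩; exact h rfl
  have hv1Vrest : v₁ ∉ Vrest := by rw [hmemVrest]; rintro ⟨-, h⟩; exact h hadj
  have hdisj : ∀ u : V, u ∈ Nv' → u ∈ Vrest → False := by
    intro u h1 h2
    exact ((hmemVrest u).1 h2).2 ((hmemNv' u).1 h1).2
  set E := ((Nv'.powerset ×ˢ Vrest.powerset).filter
    (fun p : Finset V × Finset V => p.1.card + p.2.card + 2 = m)) with hE
  have hbij : ∑ W ∈ (Finset.powersetCard m Finset.univ).filter (fun W => v₁ ∈ W ∧ v ∈ W),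
      rhd K ((indepComplex T).restrict (W ∩ Vrest)) (d - i - 2)
      = ∑ p ∈ E, rhd K ((indepComplex T).restrict p.2) (d - i - 2) := by
    refine Finset.sum_bij' (fun W _ => (W ∩ Nv', W ∩ Vrest))
      (fun p _ => insert v (insert v₁ (p.1 ∪ p.2))) ?_ ?_ ?_ ?_ ?_
    · -- maps into E
      intro W hW
      rw [Finset.mem_filter, Finset.mem_powersetCard] at hW
      obtain ⟨⟨-, hcard⟩, hv1W, hvW⟩ := hW
      have hWeq : W = insert v (insert v₁ ((W ∩ Nv') ∪ (W ∩ Vrest))) := by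
        ext u
        simp only [Finset.mem_insert, Finset.mem_union, Finset.mem_inter]
        constructor
        · intro hu
          by_cases h1 : u = v
          · exact Or.inl h1
          by_cases h2 : u = v₁
          · exact Or.inr (Or.inl h2)
          right; right
          by_cases h3 : T.Adj v u
          · exact Or.inl ⟨hu, (hmemNv' u).2 ⟨h2, h3⟩⟩
          · exact Or.inr ⟨hu, (hmemVrest u).2 ⟨h1, h3⟩⟩
        · rintro (rfl | rfl | ⟨hu, -⟩ | ⟨hu, -⟩) <;> first | exact hvW | exact hv1W | exact hu
      show (W ∩ Nv', W ∩ Vrest) ∈ E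
      rw [hE, Finset.mem_filter, Finset.mem_product]
      refine ⟨⟨Finset.mem_powerset.2 Finset.inter_subset_right,
        Finset.mem_powerset.2 Finset.inter_subset_right⟩, ?_⟩
      have d1 : Disjoint (W ∩ Nv') (W ∩ Vrest) := by
        rw [Finset.disjoint_left]
        intro u h1 h2
        exact hdisj u (Finset.mem_inter.1 h1).2 (Finset.mem_inter.1 h2).2
      have m1 : v₁ ∉ W ∩ Nv' ∪ W ∩ Vrest := by
        rw [Finset.mem_union]
        rintro (h | h)
        · exact hv1Nv' (Finset.mem_inter.1 h).2
        · exact hv1Vrest (Finset.mem_inter.1 h).2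
      have m2 : v ∉ insert v₁ (W ∩ Nv' ∪ W ∩ Vrest) := by
        rw [Finset.mem_insert, Finset.mem_union]
        rintro (h | h | h)
        · exact hvv1 h
        · exact hvNv' (Finset.mem_inter.1 h).2
        · exact hvVrest (Finset.mem_inter.1 h).2
      have hc2 : W.card = (W ∩ Nv').card + (W ∩ Vrest).card + 2 := by
        conv_lhs => rw [hWeq]
        rw [Finset.card_insert_of_notMem m2, Finset.card_insert_of_notMem m1,
          Finset.card_union_of_disjoint d1]
      dsimp only
      omega
    · -- maps back into F3
      intro p hp
      rw [hE, Finset.mem_filter, Finset.mem_product] at hp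
      obtain ⟨⟨hp1, hp2⟩, hpcard⟩ := hp
      rw [Finset.mem_powerset] at hp1 hp2
      show insert v (insert v₁ (p.1 ∪ p.2)) ∈ _
      rw [Finset.mem_filter, Finset.mem_powersetCard]
      refine ⟨⟨Finset.subset_univ _, ?_⟩, Finset.mem_insert_of_mem (Finset.mem_insert_self _ _),
        Finset.mem_insert_self _ _⟩
      have d1 : Disjoint p.1 p.2 := by
        rw [Finset.disjoint_left]
        intro u h1 h2
        exact hdisj u (hp1 h1) (hp2 h2)
      have m1 : v₁ ∉ p.1 ∪ p.2 := by
        rw [Finset.mem_union]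
        rintro (h | h)
        · exact hv1Nv' (hp1 h)
        · exact hv1Vrest (hp2 h)
      have m2 : v ∉ insert v₁ (p.1 ∪ p.2) := by
        rw [Finset.mem_insert, Finset.mem_union]
        rintro (h | h | h)
        · exact hvv1 h
        · exact hvNv' (hp1 h)
        · exact hvVrest (hp2 h)
      rw [Finset.card_insert_of_notMem m2, Finset.card_insert_of_notMem m1,
        Finset.card_union_of_disjoint d1]
      omega
    · -- left inverse
      intro W hW
      rw [Finset.mem_filter, Finset.mem_powersetCard] at hW
      obtain ⟨⟨-, hcard⟩, hv1W, hvW⟩ := hW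
      show insert v (insert v₁ ((W ∩ Nv') ∪ (W ∩ Vrest))) = W
      ext u
      simp only [Finset.mem_insert, Finset.mem_union, Finset.mem_inter]
      constructor
      · rintro (rfl | rfl | ⟨hu, -⟩ | ⟨hu, -⟩) <;> first | exact hvW | exact hv1W | exact hu
      · intro hu
        by_cases h1 : u = v
        · exact Or.inl h1
        by_cases h2 : u = v₁
        · exact Or.inr (Or.inl h2)
        right; right
        by_cases h3 : T.Adj v u
        · exact Or.inl ⟨hu, (hmemNv' u).2 ⟨h2, h3⟩⟩
        · exact Or.inr ⟨hu, (hmemVrest u).2 ⟨h1, h3⟩⟩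
    · -- right inverse
      intro p hp
      rw [hE, Finset.mem_filter, Finset.mem_product] at hp
      obtain ⟨⟨hp1, hp2⟩, -⟩ := hp
      rw [Finset.mem_powerset] at hp1 hp2
      show (insert v (insert v₁ (p.1 ∪ p.2)) ∩ Nv', insert v (insert v₁ (p.1 ∪ p.2)) ∩ Vrest)
        = p
      have e1 : insert v (insert v₁ (p.1 ∪ p.2)) ∩ Nv' = p.1 := by
        ext u
        simp only [Finset.mem_inter, Finset.mem_insert, Finset.mem_union]
        constructor
        · rintro ⟨rfl | rfl | h | h, hN⟩
          · exact absurd hN hvNv'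
          · exact absurd hN hv1Nv'
          · exact h
          · exact absurd hN (fun hN' => hdisj u hN' (hp2 h))
        · intro h
          exact ⟨Or.inr (Or.inr (Or.inl h)), hp1 h⟩
      have e2 : insert v (insert v₁ (p.1 ∪ p.2)) ∩ Vrest = p.2 := by
        ext u
        simp only [Finset.mem_inter, Finset.mem_insert, Finset.mem_union]
        constructor
        · rintro ⟨rfl | rfl | h | h, hN⟩
          · exact absurd hN hvVrest
          · exact absurd hN hv1Vrest
          · exact absurd hN (fun hN' => hdisj u (hp1 h) hN')
          · exact h
        · intro h
          exact ⟨Or.inr (Or.inr (Or.inr h)), hp2 h⟩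
      rw [e1, e2]
    · intro W hW
      rfl
  rw [hbij]
  have hmaps : ∀ p ∈ E, p.1.card ∈ Finset.range n := by
    intro p hp
    rw [hE, Finset.mem_filter, Finset.mem_product] at hp
    have := Finset.card_le_card (Finset.mem_powerset.1 hp.1.1)
    rw [Finset.mem_range]
    omega
  rw [← Finset.sum_fiberwise_of_maps_to hmaps]
  apply Finset.sum_congr rfl
  intro j hj
  have hEfilter : E.filter (fun p => p.1.card = j)
      = (Finset.powersetCard j Nv') ×ˢ
        (Vrest.powerset.filter (fun t => j + t.card + 2 = m)) := by
    ext p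
    rw [Finset.mem_filter, hE, Finset.mem_filter, Finset.mem_product, Finset.mem_product,
      Finset.mem_powersetCard, Finset.mem_filter, Finset.mem_powerset, Finset.mem_powerset]
    constructor
    · rintro ⟨⟨⟨h1, h2⟩, h3⟩, h4⟩
      exact ⟨⟨h1, h4⟩, h2, by omega⟩
    · rintro ⟨⟨h1, h4⟩, h2, h3⟩
      exact ⟨⟨⟨h1, h2⟩, by omega⟩, h4⟩
  rw [hEfilter, Finset.sum_product]
  dsimp only
  rw [Finset.sum_const, Finset.card_powersetCard, hNv'card, smul_eq_mul]
  congr 1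
  by_cases hjd : d - ((j : ℤ) + 2) < 0
  · rw [if_pos hjd]
    apply Finset.sum_eq_zero
    intro t ht
    rw [Finset.mem_filter] at ht
    omega
  · rw [if_neg hjd]
    have hdeg : d - ((j : ℤ) + 2) - (i - ((j : ℤ) + 1)) - 1 = d - i - 2 := by ring
    rw [hdeg]
    have hset : Finset.filter (fun t => j + t.card + 2 = m) Vrest.powerset
        = Finset.powersetCard ((d - ((j : ℤ) + 2)).toNat) Vrest := by
      ext t
      rw [Finset.mem_filter, Finset.mem_powerset, Finset.mem_powersetCard]
      constructor
      · rintro ⟨h1, h2⟩; exact ⟨h1, by omega⟩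
      · rintro ⟨h1, h2⟩; exact ⟨h1, by omega⟩
    rw [hset]
    have hsub := sum_rhd_subtype K T (fun u => u ≠ v ∧ ¬ T.Adj v u)
      ((d - ((j : ℤ) + 2)).toNat) (d - i - 2)
    rw [← hVrest] at hsub
    rw [← hsub]
    congr!
end

section
/- The graded Betti numbers β_{i,d}^K(G) of the edge ideal of a forest G do not depend on the field K. -/
open Finset

open SComplex

namespace ForestProof

open Finsupp SComplex

variable {U : Type*} (K : Type*) [Field K]

/-- erase with classical instances -/
noncomputable def ers (s : Finset U) (x : U) : Finset U :=
  letI := Classical.decEq U; s.erase x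

/-- insert with classical instances -/
noncomputable def ins (v : U) (s : Finset U) : Finset U :=
  letI := Classical.decEq U; insert v s

/-- position count with the auxiliary order -/
noncomputable def pos (s : Finset U) (x : U) : ℕ :=
  letI := Classical.decEq U
  letI := auxOrder U
  ({w ∈ s | w < x}).card

theorem bdry_single (s : Finset U) :
    bdry K U (Finsupp.single s (1:K)) =
      ∑ x ∈ s, ((-1:K) ^ pos s x) • Finsupp.single (ers s x) (1:K) := by
  letI := Classical.decEq U
  letI := auxOrder U
  simp [bdry, pos, ers, Finsupp.lsum, LinearMap.toSpanSingleton, LinearMap.smulRight]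

end ForestProof
namespace ForestProof

variable {U : Type*} (K : Type*) [Field K]

/-- the cone element `±(s ∪ {v})` -/
noncomputable def coneEl (v : U) (s : Finset U) : Finset U →₀ K :=
  ((-1:K) ^ pos s v) • Finsupp.single (ins v s) (1:K)

/-- the cone linear map -/
noncomputable def cone (v : U) : (Finset U →₀ K) →ₗ[K] (Finset U →₀ K) :=
  letI := Classical.decEq U
  Finsupp.lsum K fun s => LinearMap.toSpanSingleton K _
    (if v ∈ s then 0 else coneEl K v s)

theorem cone_single_mem {v : U} {s : Finset U} (h : v ∈ s) :
    cone K v (Finsupp.single s (1:K)) = 0 := by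
  letI := Classical.decEq U
  simp [cone, Finsupp.lsum, LinearMap.toSpanSingleton, LinearMap.smulRight, h]

theorem cone_single_not {v : U} {s : Finset U} (h : v ∉ s) :
    cone K v (Finsupp.single s (1:K)) = coneEl K v s := by
  letI := Classical.decEq U
  simp [cone, Finsupp.lsum, LinearMap.toSpanSingleton, LinearMap.smulRight, h]

section PosLemmas

variable {v x : U} {s : Finset U}

theorem ers_ins (h : v ∉ s) : ers (ins v s) v = s := by
  letI := Classical.decEq U
  simp [ers, ins, Finset.erase_insert h]

theorem ins_ers (h : v ∈ s) : ins v (ers s v) = s := by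
  letI := Classical.decEq U
  simp [ers, ins, Finset.insert_erase h]

theorem mem_ins_self : v ∈ ins v s := by
  letI := Classical.decEq U
  simp [ins]

theorem mem_ins_of_mem (h : x ∈ s) : x ∈ ins v s := by
  letI := Classical.decEq U
  simp [ins, h]

theorem notMem_ers_self : v ∉ ers s v := by
  letI := Classical.decEq U
  simp [ers]

theorem mem_ers (hxv : x ≠ v) (h : x ∈ s) : x ∈ ers s v := by
  letI := Classical.decEq U
  simp [ers, hxv, h]

theorem mem_of_mem_ers (h : x ∈ ers s v) : x ∈ s := by
  letI := Classical.decEq U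
  exact Finset.mem_of_mem_erase h

theorem notMem_ers_of_notMem (h : x ∉ s) : x ∉ ers s v := by
  letI := Classical.decEq U
  exact fun hx => h (Finset.mem_of_mem_erase hx)

theorem ers_subset : ers s v ⊆ s := by
  letI := Classical.decEq U
  exact Finset.erase_subset _ _

theorem card_ins (h : v ∉ s) : (ins v s).card = s.card + 1 := by
  letI := Classical.decEq U
  exact Finset.card_insert_of_notMem h

theorem card_ers (h : v ∈ s) : (ers s v).card + 1 = s.card := by
  letI := Classical.decEq U
  exact Finset.card_erase_add_one h

theorem ers_ins_ne (hxv : x ≠ v) (hv : v ∉ s) : ers (ins v s) x = ins v (ers s x) := by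
  letI := Classical.decEq U
  simp [ers, ins, Finset.erase_insert_of_ne hxv.symm]

theorem pos_ins_self (h : v ∉ s) : pos (ins v s) v = pos s v := by
  letI := Classical.decEq U
  letI := auxOrder U
  unfold pos ins
  congr 1
  rw [Finset.filter_insert]
  simp [lt_irrefl]

theorem pos_ins_lt (h : v ∉ s) (hlt : (auxOrder U).lt v x) :
    pos (ins v s) x = pos s x + 1 := by
  letI := Classical.decEq U
  letI := auxOrder U
  unfold pos ins
  rw [Finset.filter_insert, if_pos hlt, Finset.card_insert_of_notMem]
  simp [h]

theorem pos_ins_gt (h : v ∉ s) (hlt : ¬ (auxOrder U).lt v x) :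
    pos (ins v s) x = pos s x := by
  letI := Classical.decEq U
  letI := auxOrder U
  unfold pos ins
  rw [Finset.filter_insert, if_neg hlt]

theorem pos_ers_lt (hx : x ∈ s) (hlt : (auxOrder U).lt x v) :
    pos s v = pos (ers s x) v + 1 := by
  letI := Classical.decEq U
  letI := auxOrder U
  unfold pos ers
  rw [Finset.filter_erase]
  rw [Finset.card_erase_add_one (by simp [hx, hlt])]

theorem pos_ers_gt (hlt : ¬ (auxOrder U).lt x v) :
    pos (ers s x) v = pos s v := by
  letI := Classical.decEq U
  letI := auxOrder U
  unfold pos ers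
  rw [Finset.filter_erase, Finset.erase_eq_of_notMem (by simp [hlt])]

end PosLemmas

end ForestProof
namespace ForestProof

variable {U : Type*} (K : Type*) [Field K]

/-- The crucial cone identity on basis elements. -/
theorem bdry_coneEl (v : U) (s : Finset U) (hv : v ∉ s) :
    bdry K U (coneEl K v s) =
      Finsupp.single s (1:K) - cone K v (bdry K U (Finsupp.single s (1:K))) := by
  letI := Classical.decEq U
  letI := auxOrder U
  rw [coneEl, map_smul, bdry_single, bdry_single, map_sum]
  have hsum : ∑ x ∈ ins v s, ((-1:K) ^ pos (ins v s) x • Finsupp.single (ers (ins v s) x) (1:K))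
      = ((-1:K) ^ pos s v) • Finsupp.single s (1:K)
        + ∑ x ∈ s, ((-1:K) ^ pos (ins v s) x • Finsupp.single (ers (ins v s) x) (1:K)) := by
    rw [show (ins v s) = insert v s from rfl, Finset.sum_insert hv,
        show (insert v s : Finset U) = ins v s from rfl, pos_ins_self hv, ers_ins hv]
  rw [hsum, smul_add, smul_smul, ← pow_add, Even.neg_one_pow ⟨pos s v, rfl⟩, one_smul]
  have hrhs : ∀ x ∈ s, cone K v ((-1:K) ^ pos s x • Finsupp.single (ers s x) (1:K))
      = ((-1:K) ^ pos s x * (-1:K) ^ pos (ers s x) v) • Finsupp.single (ins v (ers s x)) (1:K) := by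
    intro x hx
    rw [map_smul, cone_single_not K (notMem_ers_of_notMem hv), coneEl, smul_smul]
  rw [Finset.sum_congr rfl hrhs]
  have key : ∀ x ∈ s, ((-1:K) ^ pos s v) • ((-1:K) ^ pos (ins v s) x • Finsupp.single (ers (ins v s) x) (1:K))
      = -(((-1:K) ^ pos s x * (-1:K) ^ pos (ers s x) v) • Finsupp.single (ins v (ers s x)) (1:K)) := by
    intro x hx
    have hxv : x ≠ v := fun h => hv (h ▸ hx)
    rw [ers_ins_ne hxv hv, smul_smul, ← neg_smul]
    rcases hxv.lt_or_gt with h | h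
    · -- x < v
      rw [pos_ins_gt hv (asymm h), pos_ers_lt hx h]
      congr 1
      rw [pow_succ]
      ring
    · -- v < x
      rw [pos_ins_lt hv h, pos_ers_gt (asymm h)]
      congr 1
      rw [pow_succ]
      ring
  rw [Finset.smul_sum, Finset.sum_congr rfl key, Finset.sum_neg_distrib]
  abel

end ForestProof
namespace ForestProof

open SComplex

variable {U : Type*} (K : Type*) [Field K]

/-- span of basis singles indexed by a predicate on finsets -/
noncomputable def spanOf (Pr : Finset U → Prop) : Submodule K (Finset U →₀ K) :=
  Submodule.span K {f | ∃ s, Pr s ∧ f = Finsupp.single s (1:K)}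

theorem single_mem_spanOf {Pr : Finset U → Prop} {s : Finset U} (h : Pr s) :
    Finsupp.single s (1:K) ∈ spanOf K Pr :=
  Submodule.subset_span ⟨s, h, rfl⟩

theorem spanOf_mono {Pr Q : Finset U → Prop} (h : ∀ s, Pr s → Q s) :
    spanOf K Pr ≤ spanOf K Q := by
  apply Submodule.span_mono
  rintro f ⟨s, hs, rfl⟩
  exact ⟨s, h s hs, rfl⟩

theorem map_spanOf_le {Pr : Finset U → Prop} {F : (Finset U →₀ K) →ₗ[K] (Finset U →₀ K)}
    {N : Submodule K (Finset U →₀ K)} (h : ∀ s, Pr s → F (Finsupp.single s (1:K)) ∈ N) :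
    (spanOf K Pr).map F ≤ N := by
  rw [spanOf, Submodule.map_span_le]
  rintro f ⟨s, hs, rfl⟩
  exact h s hs

theorem apply_mem_of_mem_spanOf {Pr : Finset U → Prop} {F : (Finset U →₀ K) →ₗ[K] (Finset U →₀ K)}
    {N : Submodule K (Finset U →₀ K)} (h : ∀ s, Pr s → F (Finsupp.single s (1:K)) ∈ N)
    {x : Finset U →₀ K} (hx : x ∈ spanOf K Pr) : F x ∈ N :=
  map_spanOf_le K h (Submodule.mem_map_of_mem hx)

theorem eqOn_spanOf {Pr : Finset U → Prop} {F G : (Finset U →₀ K) →ₗ[K] (Finset U →₀ K)}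
    (h : ∀ s, Pr s → F (Finsupp.single s (1:K)) = G (Finsupp.single s (1:K)))
    {x : Finset U →₀ K} (hx : x ∈ spanOf K Pr) : F x = G x := by
  refine LinearMap.eqOn_span ?_ hx
  rintro f ⟨s, hs, rfl⟩
  exact h s hs

theorem chains_eq_spanOf {Δ : SComplex U} {n : ℤ} :
    Δ.chains K n = spanOf K (fun s => s ∈ Δ.faces ∧ (s.card : ℤ) = n + 1) := by
  unfold SComplex.chains spanOf
  congr 1
  ext f
  constructor
  · rintro ⟨s, hs, hc, rfl⟩; exact ⟨s, ⟨hs, hc⟩, rfl⟩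
  · rintro ⟨s, ⟨hs, hc⟩, rfl⟩; exact ⟨s, hs, hc, rfl⟩

/-- `bdry` of a basis single lies in the span of singles over subsets with one fewer elt. -/
theorem bdry_single_mem {Pr : Finset U → Prop} {s : Finset U}
    (h : ∀ x ∈ s, Pr (ers s x)) :
    bdry K U (Finsupp.single s (1:K)) ∈ spanOf K Pr := by
  rw [bdry_single]
  exact Submodule.sum_mem _ fun x hx =>
    Submodule.smul_mem _ _ (single_mem_spanOf K (h x hx))

/-- cone identity on the span of `v`-free singles. -/
theorem bdry_cone_eq {v : U} {x : Finset U →₀ K}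
    (hx : x ∈ spanOf K (fun s => v ∉ s)) :
    bdry K U (cone K v x) = x - cone K v (bdry K U x) := by
  have := eqOn_spanOf K (F := (bdry K U).comp (cone K v))
    (G := LinearMap.id - (cone K v).comp (bdry K U))
    (Pr := fun s => v ∉ s) ?_ hx
  · simpa using this
  · intro s hs
    simp only [LinearMap.comp_apply, LinearMap.sub_apply, LinearMap.id_apply]
    rw [cone_single_not K hs, bdry_coneEl K v s hs]

theorem bdry_bdry_single (s : Finset U) :
    bdry K U (bdry K U (Finsupp.single s (1:K))) = 0 := by
  induction s using Finset.strongInductionOn with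
  | _ s ih =>
    rcases s.eq_empty_or_nonempty with rfl | ⟨v, hv⟩
    · rw [bdry_single]; simp
    · letI := Classical.decEq U
      have hv' : v ∉ ers s v := notMem_ers_self
      have h1 : Finsupp.single s (1:K) = ((-1:K) ^ pos (ers s v) v) • coneEl K v (ers s v) := by
        rw [coneEl, smul_smul, ← pow_add, Even.neg_one_pow ⟨_, rfl⟩, one_smul, ins_ers hv]
      have hmem : bdry K U (Finsupp.single (ers s v) (1:K)) ∈ spanOf K (fun t => v ∉ t) :=
        bdry_single_mem K fun x _ => notMem_ers_of_notMem hv'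
      have ih' : bdry K U (bdry K U (Finsupp.single (ers s v) (1:K))) = 0 :=
        ih (ers s v) (Finset.erase_ssubset hv)
      rw [h1, map_smul, map_smul, bdry_coneEl K v _ hv', map_sub,
        bdry_cone_eq K hmem, ih', map_zero, sub_sub_cancel]
      simp

theorem bdry_bdry (x : Finset U →₀ K) : bdry K U (bdry K U x) = 0 := by
  have : (bdry K U).comp (bdry K U) = 0 := by
    apply Finsupp.lhom_ext
    intro a b
    have : Finsupp.single a b = b • Finsupp.single a (1:K) := by
      rw [Finsupp.smul_single, smul_eq_mul, mul_one]
    simp only [LinearMap.comp_apply, this, map_smul, bdry_bdry_single, smul_zero,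
      LinearMap.zero_apply]
  exact LinearMap.congr_fun this x

end ForestProof
namespace ForestProof

open SComplex

variable {U : Type*} (K : Type*) [Field K]

theorem lsum_single (g : Finset U → (Finset U →₀ K)) (a : Finset U) :
    (Finsupp.lsum K fun s => LinearMap.toSpanSingleton K _ (g s)) (Finsupp.single a (1:K))
      = g a := by
  simp [Finsupp.lsum, LinearMap.toSpanSingleton, LinearMap.smulRight]

open scoped Classical in
/-- The chain homotopy for the leaf reduction. -/
noncomputable def hmap (u v : U) (Δ : SComplex U) : (Finset U →₀ K) →ₗ[K] (Finset U →₀ K) :=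
  Finsupp.lsum K fun s => LinearMap.toSpanSingleton K _
    (if s ∈ Δ.faces ∧ u ∉ s ∧ v ∉ s then coneEl K v s else 0)

theorem hmap_single_pos {u v : U} {Δ : SComplex U} {s : Finset U}
    (h : s ∈ Δ.faces ∧ u ∉ s ∧ v ∉ s) :
    hmap K u v Δ (Finsupp.single s (1:K)) = coneEl K v s := by
  classical
  rw [hmap, lsum_single]
  rw [if_pos h]

theorem hmap_single_neg {u v : U} {Δ : SComplex U} {s : Finset U}
    (h : ¬(s ∈ Δ.faces ∧ u ∉ s ∧ v ∉ s)) :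
    hmap K u v Δ (Finsupp.single s (1:K)) = 0 := by
  classical
  rw [hmap, lsum_single]
  rw [if_neg h]

/-- The suspension-type comparison map. -/
noncomputable def psi (u v : U) : (Finset U →₀ K) →ₗ[K] (Finset U →₀ K) :=
  cone K u - cone K v

open scoped Classical in
/-- Retraction used to prove `psi` is injective on suitable spans. -/
noncomputable def rho (u : U) : (Finset U →₀ K) →ₗ[K] (Finset U →₀ K) :=
  Finsupp.lsum K fun s => LinearMap.toSpanSingleton K _
    (if u ∈ s then ((-1:K) ^ pos (ers s u) u) • Finsupp.single (ers s u) (1:K) else 0)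

theorem rho_single_mem {u : U} {s : Finset U} (h : u ∈ s) :
    rho K u (Finsupp.single s (1:K)) =
      ((-1:K) ^ pos (ers s u) u) • Finsupp.single (ers s u) (1:K) := by
  classical
  rw [rho, lsum_single]
  rw [if_pos h]

theorem rho_single_neg {u : U} {s : Finset U} (h : u ∉ s) :
    rho K u (Finsupp.single s (1:K)) = 0 := by
  classical
  rw [rho, lsum_single]
  rw [if_neg h]

theorem rho_psi {u v : U} (huv : u ≠ v) {x : Finset U →₀ K}
    (hx : x ∈ spanOf K (fun s => u ∉ s ∧ v ∉ s)) :
    rho K u (psi K u v x) = x := by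
  have := eqOn_spanOf K (F := (rho K u).comp (psi K u v)) (G := LinearMap.id)
    (Pr := fun s => u ∉ s ∧ v ∉ s) ?_ hx
  · simpa using this
  · intro t ⟨hut, hvt⟩
    simp only [LinearMap.comp_apply, LinearMap.id_apply, psi, LinearMap.sub_apply]
    rw [cone_single_not K hut, cone_single_not K hvt, map_sub]
    have e1 : rho K u (coneEl K v t) = 0 := by
      rw [coneEl, map_smul, rho_single_neg K (by
        intro hmem
        rcases (by exact hmem : u ∈ ins v t) with h
        have : u = v ∨ u ∈ t := by
          letI := Classical.decEq U
          simpa [ins, Finset.mem_insert] using h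
        tauto), smul_zero]
    have e2 : rho K u (coneEl K u t) = Finsupp.single t (1:K) := by
      rw [coneEl, map_smul, rho_single_mem K (mem_ins_self), ers_ins hut, smul_smul,
        ← pow_add, Even.neg_one_pow ⟨_, rfl⟩, one_smul]
    rw [e1, e2, sub_zero]

end ForestProof
namespace ForestProof

open SComplex

variable {U : Type*} (K : Type*) [Field K]

theorem subset_ins {v : U} {s : Finset U} : s ⊆ ins v s := by
  letI := Classical.decEq U
  exact Finset.subset_insert _ _

theorem single_eq_coneEl {v : U} {s : Finset U} (h : v ∈ s) :
    Finsupp.single s (1:K) = ((-1:K) ^ pos (ers s v) v) • coneEl K v (ers s v) := by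
  rw [coneEl, smul_smul, ← pow_add, Even.neg_one_pow ⟨_, rfl⟩, one_smul, ins_ers h]

theorem chains_congr {Δ : SComplex U} {m m' : ℤ} (h : m = m') :
    Δ.chains K m = Δ.chains K m' := by rw [h]

theorem bdry_mem_chains {Δ : SComplex U} {m : ℤ} {x : Finset U →₀ K}
    (hx : x ∈ Δ.chains K m) : bdry K U x ∈ Δ.chains K (m-1) := by
  rw [chains_eq_spanOf] at hx ⊢
  refine apply_mem_of_mem_spanOf K ?_ hx
  rintro s ⟨hs, hc⟩
  refine bdry_single_mem K ?_
  intro y hy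
  refine ⟨Δ.down_closed hs ers_subset, ?_⟩
  have hcard := card_ers (s := s) (v := y) hy
  have : ((ers s y).card : ℤ) + 1 = (s.card : ℤ) := by exact_mod_cast hcard
  linarith

theorem finrank_map_add {M : Type*} [AddCommGroup M] [Module K M] [FiniteDimensional K M]
    (N : Submodule K M) (F : M →ₗ[K] M) :
    Module.finrank K (N.map F) + Module.finrank K ↥(N ⊓ LinearMap.ker F)
      = Module.finrank K N := by
  have h := LinearMap.finrank_range_add_finrank_ker (F.domRestrict N)
  rw [LinearMap.range_domRestrict] at h
  have e : LinearMap.ker (F.domRestrict N) = (N ⊓ LinearMap.ker F).comap N.subtype := by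
    ext x
    simp [LinearMap.mem_ker, Submodule.mem_comap, LinearMap.domRestrict_apply, x.2]
  have e2 : ((N ⊓ LinearMap.ker F).comap N.subtype).map N.subtype = N ⊓ LinearMap.ker F := by
    rw [Submodule.map_comap_subtype, ← inf_assoc, inf_idem]
  have hker : Module.finrank K ↥(LinearMap.ker (F.domRestrict N))
      = Module.finrank K ↥(N ⊓ LinearMap.ker F) :=
    ((LinearEquiv.ofEq _ _ e).trans
      ((Submodule.equivMapOfInjective N.subtype N.injective_subtype _).trans
        (LinearEquiv.ofEq _ _ e2))).finrank_eq
  rw [hker] at h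
  exact h

/-- The chain projection `P = id - ∂h - h∂`. -/
noncomputable def Pmap (u v : U) (Δ : SComplex U) : (Finset U →₀ K) →ₗ[K] (Finset U →₀ K) :=
  LinearMap.id - (bdry K U).comp (hmap K u v Δ) - (hmap K u v Δ).comp (bdry K U)

theorem Pmap_apply {u v : U} {Δ : SComplex U} (x : Finset U →₀ K) :
    Pmap K u v Δ x = x - bdry K U (hmap K u v Δ x) - hmap K u v Δ (bdry K U x) := rfl

theorem Pmap_bdry {u v : U} {Δ : SComplex U} (x : Finset U →₀ K) :
    bdry K U (Pmap K u v Δ x) = Pmap K u v Δ (bdry K U x) := by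
  simp [Pmap_apply, map_sub, bdry_bdry]

section PComp

variable {u v : U} {Δ : SComplex U}

/-- `hmap` vanishes on the span of singles containing `v`. -/
theorem hmap_zero_v {x : Finset U →₀ K} (hx : x ∈ spanOf K (fun r => v ∈ r)) :
    hmap K u v Δ x = 0 := by
  have := eqOn_spanOf K (F := hmap K u v Δ) (G := 0) (Pr := fun r => v ∈ r) ?_ hx
  · simpa using this
  · intro s hs
    simp only [LinearMap.zero_apply]
    exact hmap_single_neg K (by tauto)

theorem hmap_zero_u {x : Finset U →₀ K} (hx : x ∈ spanOf K (fun r => u ∈ r)) :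
    hmap K u v Δ x = 0 := by
  have := eqOn_spanOf K (F := hmap K u v Δ) (G := 0) (Pr := fun r => u ∈ r) ?_ hx
  · simpa using this
  · intro s hs
    simp only [LinearMap.zero_apply]
    exact hmap_single_neg K (by tauto)

theorem cone_mem_span (w : U) {x : Finset U →₀ K} (hx : x ∈ spanOf K (fun r => w ∉ r)) :
    cone K w x ∈ spanOf K (fun r => w ∈ r) := by
  refine apply_mem_of_mem_spanOf K ?_ hx
  intro s hs
  rw [cone_single_not K hs, coneEl]
  exact Submodule.smul_mem _ _ (single_mem_spanOf K mem_ins_self)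

/-- `hmap` agrees with `cone v` on spans of good singles. -/
theorem hmap_eq_cone {x : Finset U →₀ K}
    (hx : x ∈ spanOf K (fun r => r ∈ Δ.faces ∧ u ∉ r ∧ v ∉ r)) :
    hmap K u v Δ x = cone K v x := by
  refine eqOn_spanOf K (F := hmap K u v Δ) (G := cone K v) ?_ hx
  intro s hs
  rw [hmap_single_pos K hs, cone_single_not K hs.2.2]

/-- P1: `P` kills good singles (faces avoiding both `u` and `v`). -/
theorem Pmap_single_good {s : Finset U} (hs : s ∈ Δ.faces) (hu : u ∉ s) (hv : v ∉ s) :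
    Pmap K u v Δ (Finsupp.single s (1:K)) = 0 := by
  have hb : bdry K U (Finsupp.single s (1:K))
      ∈ spanOf K (fun r => r ∈ Δ.faces ∧ u ∉ r ∧ v ∉ r) :=
    bdry_single_mem K fun x _ => ⟨Δ.down_closed hs ers_subset,
      notMem_ers_of_notMem hu, notMem_ers_of_notMem hv⟩
  rw [Pmap_apply, hmap_single_pos K ⟨hs, hu, hv⟩, bdry_coneEl K v s hv, hmap_eq_cone K hb]
  abel

/-- P2: `P` kills face singles containing `v`. -/
theorem Pmap_single_v {s : Finset U} (hut : u ∉ ers s v)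
    (hs : s ∈ Δ.faces) (hv : v ∈ s) :
    Pmap K u v Δ (Finsupp.single s (1:K)) = 0 := by
  have hvt : v ∉ ers s v := notMem_ers_self
  have htf : ers s v ∈ Δ.faces := Δ.down_closed hs ers_subset
  have hb : bdry K U (Finsupp.single (ers s v) (1:K)) ∈ spanOf K (fun r => v ∉ r) :=
    bdry_single_mem K fun x _ => notMem_ers_of_notMem hvt
  have key : hmap K u v Δ (bdry K U (Finsupp.single s (1:K))) = Finsupp.single s (1:K) := by
    conv_lhs => rw [single_eq_coneEl K hv]
    rw [map_smul, bdry_coneEl K v _ hvt, map_smul, map_sub,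
      hmap_single_pos K ⟨htf, hut, hvt⟩, hmap_zero_v K (cone_mem_span K v hb), sub_zero]
    exact (single_eq_coneEl K hv).symm
  rw [Pmap_apply, hmap_single_neg K (fun h => h.2.2 hv), map_zero, sub_zero, key, sub_self]

end PComp

end ForestProof
namespace ForestProof

open SComplex

variable {U : Type*} (K : Type*) [Field K]

section PComp2

variable {u v : U} {Δ : SComplex U}

/-- P3: `P` of a face single containing `u`. -/
theorem Pmap_single_u (h1 : ∀ s ∈ Δ.faces, ¬(u ∈ s ∧ v ∈ s))
    {s : Finset U} (hs : s ∈ Δ.faces) (hu : u ∈ s) :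
    Pmap K u v Δ (Finsupp.single s (1:K))
      = ((-1:K) ^ pos (ers s u) u) • psi K u v (Finsupp.single (ers s u) (1:K)) := by
  have hv : v ∉ s := fun hv => h1 s hs ⟨hu, hv⟩
  have hut : u ∉ ers s u := notMem_ers_self
  have hvt : v ∉ ers s u := notMem_ers_of_notMem hv
  have htf : ers s u ∈ Δ.faces := Δ.down_closed hs ers_subset
  have hb : bdry K U (Finsupp.single (ers s u) (1:K)) ∈ spanOf K (fun r => u ∉ r) :=
    bdry_single_mem K fun x _ => notMem_ers_of_notMem hut
  have key : hmap K u v Δ (bdry K U (Finsupp.single s (1:K)))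
      = ((-1:K) ^ pos (ers s u) u) • coneEl K v (ers s u) := by
    conv_lhs => rw [single_eq_coneEl K hu]
    rw [map_smul, bdry_coneEl K u _ hut, map_smul, map_sub,
      hmap_single_pos K ⟨htf, hut, hvt⟩, hmap_zero_u K (cone_mem_span K u hb), sub_zero]
  rw [Pmap_apply, hmap_single_neg K (by tauto), map_zero, sub_zero, key]
  rw [psi, LinearMap.sub_apply, cone_single_not K hut, cone_single_not K hvt, smul_sub]
  conv_lhs => rw [single_eq_coneEl K hu]

/-- `ψ` anticommutes with the boundary on `u,v`-free spans. -/
theorem psi_bdry {x : Finset U →₀ K}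
    (hx : x ∈ spanOf K (fun r => u ∉ r ∧ v ∉ r)) :
    bdry K U (psi K u v x) = - psi K u v (bdry K U x) := by
  have := eqOn_spanOf K (F := (bdry K U).comp (psi K u v))
    (G := -((psi K u v).comp (bdry K U))) (Pr := fun r => u ∉ r ∧ v ∉ r) ?_ hx
  · simpa using this
  · rintro t ⟨hut, hvt⟩
    simp only [LinearMap.comp_apply, LinearMap.neg_apply]
    rw [psi, LinearMap.sub_apply, LinearMap.sub_apply, map_sub,
      cone_single_not K hut, cone_single_not K hvt,
      bdry_coneEl K u t hut, bdry_coneEl K v t hvt]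
    abel

/-- `P` fixes `ψ` of `A`-face singles. -/
theorem Pmap_psi {A : SComplex U}
    (h1 : ∀ s ∈ Δ.faces, ¬(u ∈ s ∧ v ∈ s))
    (h2 : ∀ s ∈ Δ.faces, u ∉ s → v ∉ s → ins v s ∈ Δ.faces)
    (hA : ∀ t : Finset U, t ∈ A.faces ↔ (u ∉ t ∧ ins u t ∈ Δ.faces))
    {x : Finset U →₀ K} (hx : x ∈ spanOf K (fun t => t ∈ A.faces)) :
    Pmap K u v Δ (psi K u v x) = psi K u v x := by
  have := eqOn_spanOf K (F := (Pmap K u v Δ).comp (psi K u v)) (G := psi K u v)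
    (Pr := fun t => t ∈ A.faces) ?_ hx
  · simpa using this
  · intro t ht
    obtain ⟨hut, hins⟩ := (hA t).1 ht
    have hvins : v ∉ ins u t := fun hv => h1 _ hins ⟨mem_ins_self, hv⟩
    have hvt : v ∉ t := fun hv => hvins (mem_ins_of_mem hv)
    have htf : t ∈ Δ.faces := Δ.down_closed hins subset_ins
    have hinsv : ins v t ∈ Δ.faces := h2 t htf hut hvt
    simp only [LinearMap.comp_apply]
    rw [psi, LinearMap.sub_apply, cone_single_not K hut, cone_single_not K hvt, map_sub]
    have e1 : Pmap K u v Δ (coneEl K u t) = coneEl K u t - coneEl K v t := by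
      rw [coneEl, map_smul, Pmap_single_u K h1 hins mem_ins_self, ers_ins hut,
        smul_smul, ← pow_add, Even.neg_one_pow ⟨_, rfl⟩, one_smul, psi,
        LinearMap.sub_apply, cone_single_not K hut, cone_single_not K hvt, coneEl]
    have e2 : Pmap K u v Δ (coneEl K v t) = 0 := by
      rw [coneEl, map_smul,
        Pmap_single_v K (by rw [ers_ins hvt]; exact hut) hinsv mem_ins_self, smul_zero]
    rw [e1, e2, sub_zero]

end PComp2

end ForestProof
namespace ForestProof

open SComplex

variable {U : Type*} (K : Type*) [Field K]

section LeafStep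

variable {u v : U} {Δ A : SComplex U}

theorem hmap_mem_chains (h2 : ∀ s ∈ Δ.faces, u ∉ s → v ∉ s → ins v s ∈ Δ.faces)
    {n : ℤ} {x : Finset U →₀ K} (hx : x ∈ Δ.chains K n) :
    hmap K u v Δ x ∈ Δ.chains K (n+1) := by
  classical
  rw [chains_eq_spanOf] at hx ⊢
  refine apply_mem_of_mem_spanOf K ?_ hx
  rintro s ⟨hs, hc⟩
  by_cases hcond : s ∈ Δ.faces ∧ u ∉ s ∧ v ∉ s
  · rw [hmap_single_pos K hcond, coneEl]
    refine Submodule.smul_mem _ _ (single_mem_spanOf K ⟨h2 s hs hcond.2.1 hcond.2.2, ?_⟩)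
    rw [card_ins hcond.2.2]
    push_cast
    linarith
  · rw [hmap_single_neg K hcond]
    exact Submodule.zero_mem _

theorem psi_mem_chains
    (h1 : ∀ s ∈ Δ.faces, ¬(u ∈ s ∧ v ∈ s))
    (h2 : ∀ s ∈ Δ.faces, u ∉ s → v ∉ s → ins v s ∈ Δ.faces)
    (hA : ∀ t : Finset U, t ∈ A.faces ↔ (u ∉ t ∧ ins u t ∈ Δ.faces))
    {m : ℤ} {x : Finset U →₀ K} (hx : x ∈ A.chains K m) :
    psi K u v x ∈ Δ.chains K (m+1) := by
  rw [chains_eq_spanOf] at hx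
  rw [chains_eq_spanOf]
  refine apply_mem_of_mem_spanOf K ?_ hx
  rintro t ⟨ht, hc⟩
  obtain ⟨hut, hins⟩ := (hA t).1 ht
  have hvins : v ∉ ins u t := fun hv => h1 _ hins ⟨mem_ins_self, hv⟩
  have hvt : v ∉ t := fun hv => hvins (mem_ins_of_mem hv)
  have htf : t ∈ Δ.faces := Δ.down_closed hins subset_ins
  have hinsv : ins v t ∈ Δ.faces := h2 t htf hut hvt
  rw [psi, LinearMap.sub_apply, cone_single_not K hut, cone_single_not K hvt, coneEl, coneEl]
  refine Submodule.sub_mem _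
    (Submodule.smul_mem _ _ (single_mem_spanOf K ⟨hins, ?_⟩))
    (Submodule.smul_mem _ _ (single_mem_spanOf K ⟨hinsv, ?_⟩)) <;>
  · rw [card_ins (by assumption)]
    push_cast
    linarith

theorem Pmap_mem_psi_chains
    (h1 : ∀ s ∈ Δ.faces, ¬(u ∈ s ∧ v ∈ s))
    (hA : ∀ t : Finset U, t ∈ A.faces ↔ (u ∉ t ∧ ins u t ∈ Δ.faces))
    {m : ℤ} {x : Finset U →₀ K} (hx : x ∈ Δ.chains K m) :
    Pmap K u v Δ x ∈ (A.chains K (m-1)).map (psi K u v) := by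
  classical
  rw [chains_eq_spanOf] at hx
  refine apply_mem_of_mem_spanOf K ?_ hx
  rintro s ⟨hs, hc⟩
  by_cases hu : u ∈ s
  · rw [Pmap_single_u K h1 hs hu]
    refine Submodule.smul_mem _ _ (Submodule.mem_map_of_mem ?_)
    rw [chains_eq_spanOf]
    refine single_mem_spanOf K ⟨(hA _).2 ⟨notMem_ers_self, by rw [ins_ers hu]; exact hs⟩, ?_⟩
    have hcard := card_ers (s := s) (v := u) hu
    have : ((ers s u).card : ℤ) + 1 = (s.card : ℤ) := by exact_mod_cast hcard
    linarith
  · by_cases hv : v ∈ s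
    · rw [Pmap_single_v K
          (notMem_ers_of_notMem (fun hu' => h1 s hs ⟨hu', hv⟩)) hs hv]
      exact Submodule.zero_mem _
    · rw [Pmap_single_good K hs hu hv]
      exact Submodule.zero_mem _

theorem chains_le_spanOf_faces {Δ' : SComplex U} {m : ℤ} :
    Δ'.chains K m ≤ spanOf K (fun t => t ∈ Δ'.faces) := by
  rw [chains_eq_spanOf]
  exact spanOf_mono K fun s h => h.1

theorem chainsA_le_uv
    (h1 : ∀ s ∈ Δ.faces, ¬(u ∈ s ∧ v ∈ s))
    (hA : ∀ t : Finset U, t ∈ A.faces ↔ (u ∉ t ∧ ins u t ∈ Δ.faces))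
    {m : ℤ} : A.chains K m ≤ spanOf K (fun t => u ∉ t ∧ v ∉ t) := by
  rw [chains_eq_spanOf]
  refine spanOf_mono K ?_
  rintro t ⟨ht, -⟩
  obtain ⟨hut, hins⟩ := (hA t).1 ht
  exact ⟨hut, fun hv => h1 _ hins ⟨mem_ins_self, mem_ins_of_mem hv⟩⟩

theorem leaf_step [Fintype U] (huv : u ≠ v)
    (h1 : ∀ s ∈ Δ.faces, ¬(u ∈ s ∧ v ∈ s))
    (h2 : ∀ s ∈ Δ.faces, u ∉ s → v ∉ s → ins v s ∈ Δ.faces)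
    (hA : ∀ t : Finset U, t ∈ A.faces ↔ (u ∉ t ∧ ins u t ∈ Δ.faces))
    (n : ℤ) : rhd K Δ n = rhd K A (n-1) := by
  classical
  unfold SComplex.rhd
  set Ψ := psi K u v with hΨdef
  set P := Pmap K u v Δ with hPdef
  set Zd := Δ.chains K n ⊓ LinearMap.ker (bdry K U) with hZddef
  set Bd := (Δ.chains K (n+1)).map (bdry K U) with hBddef
  set Za := A.chains K (n-1) ⊓ LinearMap.ker (bdry K U) with hZadef
  set Ba := (A.chains K (n-1+1)).map (bdry K U) with hBadef
  have hAface_span : ∀ m : ℤ, A.chains K m ≤ spanOf K (fun t => t ∈ A.faces) :=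
    fun m => chains_le_spanOf_faces K
  have hAuv : ∀ m : ℤ, A.chains K m ≤ spanOf K (fun t => u ∉ t ∧ v ∉ t) :=
    fun m => chainsA_le_uv K h1 hA
  have hBdZd : Bd ≤ Zd := by
    rintro x ⟨w, hw, rfl⟩
    refine Submodule.mem_inf.2 ⟨?_, LinearMap.mem_ker.2 (bdry_bdry K w)⟩
    have := bdry_mem_chains K hw
    rwa [chains_congr K (show n+1-1 = n by ring)] at this
  have hBaZa : Ba ≤ Za := by
    rintro x ⟨w, hw, rfl⟩
    refine Submodule.mem_inf.2 ⟨?_, LinearMap.mem_ker.2 (bdry_bdry K w)⟩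
    have := bdry_mem_chains K hw
    rwa [chains_congr K (show n-1+1-1 = n-1 by ring)] at this
  have hC2 : Zd.map P = Za.map Ψ := by
    apply le_antisymm
    · rintro _ ⟨x, hx, rfl⟩
      obtain ⟨hxc, hxk⟩ := Submodule.mem_inf.1 hx
      obtain ⟨y, hy, hyx⟩ := Pmap_mem_psi_chains K h1 hA hxc
      have hbo : bdry K U (P x) = 0 := by
        rw [hPdef, Pmap_bdry, LinearMap.mem_ker.1 hxk, map_zero]
      have hpsiz : Ψ (bdry K U y) = 0 := by
        have hb := psi_bdry K (hAuv _ hy)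
        rw [← hΨdef] at hb
        rw [hyx, hbo] at hb
        rw [← neg_eq_zero, ← hb]
      have hky : bdry K U y = 0 := by
        have h0 := rho_psi K huv (x := bdry K U y)
          ((spanOf_mono K (fun s h => h)) ((apply_mem_of_mem_spanOf K
            (fun s hPr => ?_) (hAuv _ hy) : bdry K U y ∈ spanOf K (fun t => u ∉ t ∧ v ∉ t))))
        · rw [← hΨdef, hpsiz, map_zero] at h0
          exact h0.symm
        · exact bdry_single_mem K fun z hz =>
            ⟨notMem_ers_of_notMem hPr.1, notMem_ers_of_notMem hPr.2⟩
      have hyZa : y ∈ Za := Submodule.mem_inf.2 ⟨hy, LinearMap.mem_ker.2 hky⟩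
      rw [← hyx]
      exact Submodule.mem_map_of_mem hyZa
    · rintro _ ⟨y, hy, rfl⟩
      obtain ⟨hyc, hyk⟩ := Submodule.mem_inf.1 hy
      have hmem : Ψ y ∈ Δ.chains K n := by
        have := psi_mem_chains K h1 h2 hA hyc
        rw [← hΨdef] at this
        rwa [chains_congr K (show n-1+1 = n by ring)] at this
      have hker : bdry K U (Ψ y) = 0 := by
        have := psi_bdry K (hAuv _ hyc)
        rw [← hΨdef] at this
        rw [this, LinearMap.mem_ker.1 hyk, map_zero, neg_zero]
      have hZdmem : Ψ y ∈ Zd := Submodule.mem_inf.2 ⟨hmem, LinearMap.mem_ker.2 hker⟩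
      have hfix : P (Ψ y) = Ψ y := by
        have := Pmap_psi K h1 h2 hA (hAface_span _ hyc)
        rw [← hΨdef, ← hPdef] at this
        exact this
      rw [← hfix]
      exact Submodule.mem_map_of_mem hZdmem
  have hC3 : Bd.map P = Ba.map Ψ := by
    apply le_antisymm
    · rintro _ ⟨x, hx, rfl⟩
      obtain ⟨w, hw, rfl⟩ := hx
      obtain ⟨z, hz, hzw⟩ := Pmap_mem_psi_chains K h1 hA hw
      have hz' : z ∈ A.chains K (n-1+1) := by
        rwa [chains_congr K (show n+1-1 = n-1+1 by ring)] at hz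
      have e : P (bdry K U w) = Ψ (-(bdry K U z)) := by
        have hpb := psi_bdry K (hAuv _ hz)
        rw [← hΨdef] at hpb
        rw [hPdef, ← Pmap_bdry, ← hPdef, ← hzw, hpb, map_neg]
      rw [e]
      exact Submodule.mem_map_of_mem
        (Submodule.neg_mem _ (Submodule.mem_map_of_mem hz'))
    · rintro _ ⟨yb, hyb, rfl⟩
      obtain ⟨z, hz, rfl⟩ := hyb
      have hpz : Ψ z ∈ Δ.chains K (n+1) := by
        have := psi_mem_chains K h1 h2 hA hz
        rw [← hΨdef] at this
        rwa [chains_congr K (show n-1+1+1 = n+1 by ring)] at this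
      have hbz : bdry K U z ∈ A.chains K (n-1) := by
        have := bdry_mem_chains K hz
        rwa [chains_congr K (show n-1+1-1 = n-1 by ring)] at this
      have e : Ψ (bdry K U z) = -(bdry K U (Ψ z)) := by
        have hpb := psi_bdry K (hAuv _ hz)
        rw [← hΨdef] at hpb
        rw [hpb, neg_neg]
      have hmem : Ψ (bdry K U z) ∈ Bd := by
        rw [e]
        exact Submodule.neg_mem _ (Submodule.mem_map_of_mem hpz)
      have hfix : P (Ψ (bdry K U z)) = Ψ (bdry K U z) := by
        have := Pmap_psi K h1 h2 hA (hAface_span _ hbz)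
        rw [← hΨdef, ← hPdef] at this
        exact this
      rw [← hfix]
      exact Submodule.mem_map_of_mem hmem
  have hC4 : Zd ⊓ LinearMap.ker P = Bd ⊓ LinearMap.ker P := by
    apply le_antisymm
    · rintro x ⟨hxZ, hxP⟩
      obtain ⟨hxc, hxk⟩ := Submodule.mem_inf.1 hxZ
      have hPx : P x = x - bdry K U (hmap K u v Δ x) - hmap K u v Δ (bdry K U x) := by
        rw [hPdef]; exact Pmap_apply K x
      rw [LinearMap.mem_ker.1 hxP, LinearMap.mem_ker.1 hxk, map_zero, sub_zero] at hPx
      have hx' : x = bdry K U (hmap K u v Δ x) := eq_of_sub_eq_zero hPx.symm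
      refine Submodule.mem_inf.2 ⟨?_, hxP⟩
      rw [hx']
      exact Submodule.mem_map_of_mem (hmap_mem_chains K h2 hxc)
    · exact inf_le_inf_right _ hBdZd
  have hfr : ∀ (N : Submodule K (Finset U →₀ K)),
      N ≤ spanOf K (fun t => u ∉ t ∧ v ∉ t) →
      Module.finrank K ↥(N.map Ψ) = Module.finrank K ↥N := by
    intro N hN
    refine le_antisymm (Submodule.finrank_map_le _ _) ?_
    have hle : N ≤ (N.map Ψ).map (rho K u) := by
      intro y hy
      have : rho K u (Ψ y) = y := by
        rw [hΨdef]; exact rho_psi K huv (hN hy)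
      rw [← this]
      exact Submodule.mem_map_of_mem (Submodule.mem_map_of_mem hy)
    calc Module.finrank K ↥N ≤ Module.finrank K ↥((N.map Ψ).map (rho K u)) :=
          Submodule.finrank_mono hle
      _ ≤ Module.finrank K ↥(N.map Ψ) := Submodule.finrank_map_le _ _
  have h5 := finrank_map_add K Zd P
  have h6 := finrank_map_add K Bd P
  have frcongr := fun (N N' : Submodule K (Finset U →₀ K)) (h : N = N') =>
    congrArg (fun N : Submodule K (Finset U →₀ K) => Module.finrank K ↥N) h
  have e5 : Module.finrank K ↥(Zd.map P) = Module.finrank K ↥Za :=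
    (frcongr _ _ hC2).trans (hfr Za (le_trans inf_le_left (hAuv _)))
  have e6 : Module.finrank K ↥(Bd.map P) = Module.finrank K ↥Ba :=
    (frcongr _ _ hC3).trans (hfr Ba (le_trans (le_trans hBaZa inf_le_left) (hAuv _)))
  have ek : Module.finrank K ↥(Zd ⊓ LinearMap.ker P)
      = Module.finrank K ↥(Bd ⊓ LinearMap.ker P) := frcongr _ _ hC4
  rw [e5] at h5
  rw [e6] at h6
  omega

end LeafStep

end ForestProof
namespace ForestProof

open SComplex

variable {U : Type*} (K : Type*) [Field K]

theorem spanOf_bot {Pr : Finset U → Prop} (h : ∀ s, ¬ Pr s) : spanOf K Pr = ⊥ := by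
  rw [spanOf, show {f | ∃ s, Pr s ∧ f = Finsupp.single s (1:K)} = (∅ : Set _) by
    ext f; simp only [Set.mem_setOf_eq, Set.mem_empty_iff_false, iff_false, not_exists]
    exact fun s hs => absurd hs.1 (h s), Submodule.span_empty]

/-- Isolated-vertex (cone) lemma: all reduced homology vanishes. -/
theorem cone_step [Fintype U] {v : U} {Δ : SComplex U}
    (hv : ∀ s ∈ Δ.faces, ins v s ∈ Δ.faces) (n : ℤ) : rhd K Δ n = 0 := by
  classical
  unfold SComplex.rhd
  have h2 : ∀ s ∈ Δ.faces, v ∉ s → v ∉ s → ins v s ∈ Δ.faces := fun s hs _ _ => hv s hs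
  have key : Δ.chains K n ⊓ LinearMap.ker (bdry K U)
      = (Δ.chains K (n+1)).map (bdry K U) := by
    apply le_antisymm
    · rintro x ⟨hxc, hxk⟩
      have hPzero : Pmap K v v Δ x = 0 := by
        rw [chains_eq_spanOf] at hxc
        have := eqOn_spanOf K (F := Pmap K v v Δ) (G := 0)
          (Pr := fun s => s ∈ Δ.faces ∧ (s.card : ℤ) = n + 1) ?_ hxc
        · simpa using this
        · rintro s ⟨hs, -⟩
          simp only [LinearMap.zero_apply]
          by_cases hvs : v ∈ s
          · exact Pmap_single_v K notMem_ers_self hs hvs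
          · exact Pmap_single_good K hs hvs hvs
      have hPx : Pmap K v v Δ x
          = x - bdry K U (hmap K v v Δ x) - hmap K v v Δ (bdry K U x) := Pmap_apply K x
      rw [hPzero, LinearMap.mem_ker.1 hxk, map_zero, sub_zero] at hPx
      have hx' : x = bdry K U (hmap K v v Δ x) := eq_of_sub_eq_zero hPx.symm
      rw [hx']
      exact Submodule.mem_map_of_mem (hmap_mem_chains K h2 hxc)
    · rintro x ⟨w, hw, rfl⟩
      refine Submodule.mem_inf.2 ⟨?_, LinearMap.mem_ker.2 (bdry_bdry K w)⟩
      have := bdry_mem_chains K hw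
      rwa [chains_congr K (show n+1-1 = n by ring)] at this
  rw [(congrArg (fun N : Submodule K (Finset U →₀ K) => Module.finrank K ↥N) key :
    Module.finrank K ↥(Δ.chains K n ⊓ LinearMap.ker (bdry K U)) = _)]
  omega

/-- The complex with only the empty face. -/
theorem rhd_empty [Fintype U] {Δ : SComplex U} (h : Δ.faces = {∅}) (n : ℤ) :
    rhd K Δ n = if n = -1 then 1 else 0 := by
  classical
  unfold SComplex.rhd
  have hchains : ∀ m : ℤ, m ≠ -1 → Δ.chains K m = ⊥ := by
    intro m hm
    rw [chains_eq_spanOf]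
    refine spanOf_bot K ?_
    rintro s ⟨hs, hc⟩
    rw [h] at hs
    rw [Set.mem_singleton_iff.1 hs] at hc
    simp only [Finset.card_empty, Nat.cast_zero] at hc
    omega
  have hBzero : (Δ.chains K (n+1)).map (bdry K U) = ⊥ := by
    by_cases hn : n + 1 = -1
    · apply le_antisymm _ bot_le
      rintro x ⟨w, hw, rfl⟩
      rw [chains_eq_spanOf] at hw
      have : bdry K U w = 0 := by
        have := eqOn_spanOf K (F := bdry K U) (G := 0)
          (Pr := fun s => s ∈ Δ.faces ∧ (s.card : ℤ) = n + 1 + 1) ?_ hw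
        · simpa using this
        · rintro s ⟨hs, hc⟩
          rw [h] at hs
          rw [Set.mem_singleton_iff.1 hs]
          rw [bdry_single]
          simp
      simp [this]
    · rw [hchains _ hn, Submodule.map_bot]
  rw [hBzero]
  by_cases hn : n = -1
  · subst hn
    have hc : Δ.chains K (-1) = Submodule.span K {Finsupp.single (∅ : Finset U) (1:K)} := by
      rw [chains_eq_spanOf, spanOf]
      congr 1
      ext f
      simp only [Set.mem_setOf_eq, Set.mem_singleton_iff]
      constructor
      · rintro ⟨s, ⟨hs, -⟩, rfl⟩
        rw [h] at hs
        rw [Set.mem_singleton_iff.1 hs]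
      · rintro rfl
        exact ⟨∅, ⟨by rw [h]; rfl, by simp⟩, rfl⟩
    have hker : Δ.chains K (-1) ⊓ LinearMap.ker (bdry K U) = Δ.chains K (-1) := by
      refine inf_eq_left.2 ?_
      rw [hc, Submodule.span_le]
      rintro f rfl
      simp only [SetLike.mem_coe, LinearMap.mem_ker]
      rw [bdry_single]
      simp
    rw [hker, hc]
    rw [finrank_span_singleton (by
      intro heq
      have := DFunLike.congr_fun heq (∅ : Finset U)
      simp at this)]
    simp
  · have : Δ.chains K n ⊓ LinearMap.ker (bdry K U) = ⊥ := by
      rw [hchains _ hn]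
      exact bot_inf_eq _
    rw [this]
    simp [hn]

end ForestProof
namespace ForestProof

open SComplex SimpleGraph

variable {V : Type*} [Fintype V] {G : SimpleGraph V}

theorem exists_leaf (hG : G.IsAcyclic) {W : Finset V} (hW : W.Nonempty)
    (hdeg : ∀ x ∈ W, ∃ y ∈ W, G.Adj x y) :
    ∃ v ∈ W, ∃ u ∈ W, G.Adj v u ∧ ∀ w ∈ W, G.Adj v w → w = u := by
  classical
  set T : Set ℕ := {n | ∃ (a : V) (b : V) (p : G.Walk a b),
    p.IsPath ∧ (∀ x ∈ p.support, x ∈ W) ∧ p.length = n} with hT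
  obtain ⟨x₀, hx₀⟩ := hW
  have hTne : T.Nonempty := ⟨0, x₀, x₀, Walk.nil, Walk.IsPath.nil, by
    intro x hx
    simp only [Walk.support_nil, List.mem_singleton] at hx
    rwa [hx], rfl⟩
  have hTbdd : BddAbove T := by
    refine ⟨Fintype.card V, ?_⟩
    rintro n ⟨a, b, p, hp, -, rfl⟩
    exact (hp.length_lt).le
  obtain ⟨a, b, p, hp, hsupp, hlen⟩ := Nat.sSup_mem hTne hTbdd
  have hvW : a ∈ W := hsupp _ p.start_mem_support
  have hmax : ∀ w, G.Adj w a → w ∈ W → w ∈ p.support := by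
    intro w hadj hwW
    by_contra hws
    have hcons : (Walk.cons hadj p).IsPath := (Walk.cons_isPath_iff _ _).2 ⟨hp, hws⟩
    have hmem : (p.length + 1) ∈ T := by
      refine ⟨w, b, Walk.cons hadj p, hcons, ?_, rfl⟩
      intro x hx
      rw [Walk.support_cons, List.mem_cons] at hx
      rcases hx with rfl | hx
      · exact hwW
      · exact hsupp x hx
    have := le_csSup hTbdd hmem
    omega
  cases p with
  | nil =>
    obtain ⟨y, hyW, hady⟩ := hdeg a hvW
    have : y ∈ Walk.support (Walk.nil : G.Walk a a) := hmax y hady.symm hyW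
    simp only [Walk.support_nil, List.mem_singleton] at this
    exact absurd this hady.ne'
  | @cons _ c _ hvc q =>
    refine ⟨a, hvW, c, hsupp c (by simp [Walk.support_cons]), hvc, ?_⟩
    intro w hwW hadj
    by_contra hwc
    have hwa : w ≠ a := hadj.ne'
    have hwsupp : w ∈ (Walk.cons hvc q).support := hmax w hadj.symm hwW
    set p' := Walk.cons hvc q with hp'
    have hq2path : (p'.takeUntil w hwsupp).IsPath := hp.takeUntil _
    have hrpath : (Walk.cons hadj (Walk.nil : G.Walk w w)).IsPath :=
      (Walk.cons_isPath_iff _ _).2 ⟨Walk.IsPath.nil, by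
        simp only [Walk.support_nil, List.mem_singleton]
        exact fun h => hwa h.symm⟩
    have hpatheq : p'.takeUntil w hwsupp = Walk.cons hadj Walk.nil := by
      have := hG.path_unique ⟨p'.takeUntil w hwsupp, hq2path⟩ ⟨Walk.cons hadj Walk.nil, hrpath⟩
      exact congrArg Subtype.val this
    have hspec := p'.take_spec hwsupp
    rw [hpatheq] at hspec
    have hsupp_eq := congrArg Walk.support hspec
    rw [Walk.cons_append, Walk.nil_append, Walk.support_cons, Walk.support_cons] at hsupp_eq
    have : (p'.dropUntil w hwsupp).support = q.support := by
      exact List.cons_injective.eq_iff.1 hsupp_eq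
    have hheads := congrArg (fun l => l.head?) this
    rw [Walk.support_eq_cons, Walk.support_eq_cons (p := q)] at hheads
    simp only [List.head?_cons] at hheads
    exact hwc (Option.some_injective _ hheads)

end ForestProof
namespace ForestProof

open SComplex SimpleGraph

variable {V : Type*} [Fintype V] {G : SimpleGraph V}

theorem restrict_mem_faces {W : Finset V} {s : Finset V} :
    s ∈ ((indepComplex G).restrict W).faces ↔
      (∀ a ∈ s, ∀ b ∈ s, ¬ G.Adj a b) ∧ s ⊆ W := Iff.rfl

theorem rhd_field_indep (hG : G.IsAcyclic) (K L : Type*) [Field K] [Field L] :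
    ∀ (N : ℕ) (W : Finset V), W.card ≤ N → ∀ n : ℤ,
      rhd K ((indepComplex G).restrict W) n = rhd L ((indepComplex G).restrict W) n := by
  classical
  intro N
  induction N with
  | zero =>
    intro W hcard n
    have hWe : W = ∅ := Finset.card_eq_zero.1 (Nat.le_zero.1 hcard)
    subst hWe
    have hfaces : ((indepComplex G).restrict (∅ : Finset V)).faces = {∅} := by
      ext s
      simp only [Set.mem_singleton_iff, restrict_mem_faces]
      constructor
      · rintro ⟨-, hsub⟩
        exact Finset.subset_empty.1 hsub
      · rintro rfl
        exact ⟨by simp, by simp⟩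
    rw [rhd_empty K hfaces n, rhd_empty L hfaces n]
  | succ N ih =>
    intro W hcard n
    by_cases hiso : ∃ v ∈ W, ∀ w ∈ W, ¬ G.Adj v w
    · obtain ⟨v, hvW, hnone⟩ := hiso
      have hv : ∀ s ∈ ((indepComplex G).restrict W).faces,
          ins v s ∈ ((indepComplex G).restrict W).faces := by
        rintro s ⟨hind, hsub⟩
        letI := Classical.decEq V
        refine ⟨?_, ?_⟩
        · intro a ha b hb
          rw [show ins v s = insert v s from rfl, Finset.mem_insert] at ha hb
          rcases ha with rfl | ha <;> rcases hb with rfl | hb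
          · exact fun h => (G.irrefl h)
          · exact hnone b (hsub hb)
          · exact fun h => hnone a (hsub ha) h.symm
          · exact hind a ha b hb
        · rw [show ins v s = insert v s from rfl]
          exact Finset.insert_subset hvW hsub
      rw [cone_step K hv n, cone_step L hv n]
    · by_cases hWe : W = ∅
      · subst hWe
        have hfaces : ((indepComplex G).restrict (∅ : Finset V)).faces = {∅} := by
          ext s
          simp only [Set.mem_singleton_iff, restrict_mem_faces]
          constructor
          · rintro ⟨-, hsub⟩
            exact Finset.subset_empty.1 hsub
          · rintro rfl
            exact ⟨by simp, by simp⟩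
        rw [rhd_empty K hfaces n, rhd_empty L hfaces n]
      · push_neg at hiso
        obtain ⟨v, hvW, u, huW, hadj, huniq⟩ :=
          exists_leaf hG (Finset.nonempty_iff_ne_empty.2 hWe) hiso
        letI := Classical.decEq V
        set W' := W.filter (fun w => ¬ G.Adj u w ∧ w ≠ u) with hW'def
        have huv : u ≠ v := hadj.ne'
        have h1 : ∀ s ∈ ((indepComplex G).restrict W).faces, ¬(u ∈ s ∧ v ∈ s) := by
          rintro s ⟨hind, -⟩ ⟨hu', hv'⟩
          exact hind v hv' u hu' hadj
        have h2 : ∀ s ∈ ((indepComplex G).restrict W).faces,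
            u ∉ s → v ∉ s → ins v s ∈ ((indepComplex G).restrict W).faces := by
          rintro s ⟨hind, hsub⟩ hus hvs
          refine ⟨?_, ?_⟩
          · intro a ha b hb
            rw [show ins v s = insert v s from rfl, Finset.mem_insert] at ha hb
            rcases ha with rfl | ha <;> rcases hb with rfl | hb
            · exact fun h => (G.irrefl h)
            · exact fun h => hus ((huniq b (hsub hb) h) ▸ hb)
            · exact fun h => hus ((huniq a (hsub ha) h.symm) ▸ ha)
            · exact hind a ha b hb
          · rw [show ins v s = insert v s from rfl]
            exact Finset.insert_subset hvW hsub
        have hA : ∀ t : Finset V, t ∈ ((indepComplex G).restrict W').faces ↔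
            (u ∉ t ∧ ins u t ∈ ((indepComplex G).restrict W).faces) := by
          intro t
          rw [show ins u t = insert u t from rfl]
          constructor
          · rintro ⟨hind, hsub⟩
            have hnotu : u ∉ t := fun hu' => by
              have := hsub hu'
              rw [hW'def, Finset.mem_filter] at this
              exact this.2.2 rfl
            refine ⟨hnotu, ⟨?_, ?_⟩⟩
            · intro a ha b hb
              rw [Finset.mem_insert] at ha hb
              rcases ha with rfl | ha <;> rcases hb with rfl | hb
              · exact fun h => (G.irrefl h)
              · exact fun h => ((Finset.mem_filter.1 (hsub hb)).2.1 h)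
              · exact fun h => ((Finset.mem_filter.1 (hsub ha)).2.1 h.symm)
              · exact hind a ha b hb
            · refine Finset.insert_subset huW ?_
              exact fun x hx => (Finset.mem_filter.1 (hsub hx)).1
          · rintro ⟨hnotu, hind, hsub⟩
            refine ⟨?_, ?_⟩
            · intro a ha b hb
              exact hind a (Finset.mem_insert_of_mem ha) b (Finset.mem_insert_of_mem hb)
            · intro x hx
              rw [hW'def, Finset.mem_filter]
              refine ⟨hsub (Finset.mem_insert_of_mem hx), ?_, ?_⟩
              · exact hind u (Finset.mem_insert_self u t) x (Finset.mem_insert_of_mem hx)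
              · exact fun h => hnotu (h ▸ hx)
        rw [leaf_step K huv h1 h2 hA n, leaf_step L huv h1 h2 hA n]
        apply ih
        have hss : W' ⊂ W := by
          refine Finset.ssubset_iff_of_subset (Finset.filter_subset _ _) |>.2 ⟨u, huW, ?_⟩
          rw [Finset.mem_filter]
          rintro ⟨-, -, h⟩
          exact h rfl
        have := Finset.card_lt_card hss
        omega

end ForestProof

/-- The graded Betti numbers of the edge ideal of a forest do not depend on
the ground field. -/
theorem betti_forest_field_independent {V : Type*} [Fintype V] (G : SimpleGraph V)
    (hG : G.IsAcyclic) (K L : Type*) [Field K] [Field L] :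
    ∀ i d : ℤ, bettiG K G i d = bettiG L G i d := by
  intro i d
  unfold bettiG SComplex.betti
  by_cases hd : d < 0
  · rw [if_pos hd, if_pos hd]
  · rw [if_neg hd, if_neg hd]
    refine Finset.sum_congr rfl ?_
    intro W _
    exact ForestProof.rhd_field_indep hG K L W.card W le_rfl _
end
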